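/- arXiv:1507.03721 — 7 statements merged into one kernel-verified Lean document; each statement's English description precedes it below -/
import Mathlib

section
/- Let (Λ, dx) be a complete σ-finite measure space, N ≥ 2 an integer, and (u_n) a sequence of finite real-valued functions on Λ. If there exists a finite function U on Λ^N such that (G_{N,1} u_n)(x_1,...,x_N) = N^{-1} Σ_{i=1}^N u_n(x_i) converges to U(x_1,...,x_N) for a.e. (x_1,...,x_N) ∈ Λ^N, then there exists a finite function u on Λ such that u_n → u a.e. on Λ. -/
/-! By Fubini, for a typical choice of `x₂, …, x_N` the sums `∑ᵢ uₙ(xᵢ)` converge for a.e. `x₁`,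
so `uₙ - cₙ` converges a.e. for suitable constants `cₙ`. Evaluating at the coordinates of a
typical point of `Λ^N` and comparing with the convergent sum there forces `cₙ` itself to
converge. -/

open MeasureTheory Filter Topology

lemma MeasureTheory.Measure.pi_ne_zero {ι : Type*} [Fintype ι] {α : ι → Type*}
    [∀ i, MeasurableSpace (α i)] {μ : ∀ i, Measure (α i)} [∀ i, SigmaFinite (μ i)]
    (hμ : ∀ i, μ i ≠ 0) : Measure.pi μ ≠ 0 := by
  rw [← Measure.measure_univ_ne_zero, Measure.pi_univ]
  exact Finset.prod_ne_zero_iff.2 fun i _ => Measure.measure_univ_ne_zero.2 (hμ i)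

lemma exists_ae_tendsto_sub_of_ae_prod {α β : Type*} [MeasurableSpace α] [MeasurableSpace β]
    {μ : Measure α} {ν : Measure β} [SFinite μ] [SFinite ν] (hν : ν ≠ 0)
    {f : ℕ → α → ℝ} {g : ℕ → β → ℝ}
    (h : ∀ᵐ p ∂μ.prod ν, ∃ L, Tendsto (fun n => f n p.1 + g n p.2) atTop (𝓝 L)) :
    ∃ c : ℕ → ℝ, ∃ w : α → ℝ, ∀ᵐ x ∂μ, Tendsto (fun n => f n x - c n) atTop (𝓝 (w x)) := by
  have h' : ∀ᵐ y ∂ν, ∀ᵐ x ∂μ, ∃ L, Tendsto (fun n => f n x + g n y) atTop (𝓝 L) :=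
    Measure.ae_ae_of_ae_prod (Measure.measurePreserving_swap.quasiMeasurePreserving.ae h)
  have := ae_neBot.2 hν
  obtain ⟨y, hy⟩ := h'.exists
  refine ⟨fun n => -g n y, fun x => limUnder atTop fun n => f n x + g n y, ?_⟩
  filter_upwards [hy] with x hx
  simpa using tendsto_nhds_limUnder hx

lemma ae_prod_cons_of_ae_pi {Λ : Type*} [MeasurableSpace Λ] {μ : Measure Λ} [SigmaFinite μ]
    {M : ℕ} {P : (Fin (M + 1) → Λ) → Prop} (h : ∀ᵐ x ∂Measure.pi fun _ => μ, P x) :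
    ∀ᵐ p ∂μ.prod (Measure.pi fun _ : Fin M => μ), P (Fin.cons p.1 p.2) := by
  have := ((measurePreserving_piFinSuccAbove (fun _ : Fin (M + 1) => μ) 0).symm
    _).quasiMeasurePreserving.ae h
  filter_upwards [this] with p hp
  simpa [Fin.insertNthEquiv, Fin.insertNth_zero'] using hp

lemma exists_ae_tendsto_of_ae_tendsto_sum {Λ ι : Type*} [MeasurableSpace Λ] [Fintype ι]
    [Nonempty ι] {μ : Measure Λ} [SigmaFinite μ] (hμ : μ ≠ 0) {u : ℕ → Λ → ℝ}
    (hsum : ∀ᵐ x ∂Measure.pi fun _ : ι => μ,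
      ∃ L, Tendsto (fun n => ∑ i, u n (x i)) atTop (𝓝 L))
    {c : ℕ → ℝ} {w : Λ → ℝ} (hw : ∀ᵐ t ∂μ, Tendsto (fun n => u n t - c n) atTop (𝓝 (w t))) :
    ∃ v : Λ → ℝ, ∀ᵐ t ∂μ, Tendsto (fun n => u n t) atTop (𝓝 (v t)) := by
  have hw_pi : ∀ᵐ x ∂Measure.pi fun _ : ι => μ,
      ∀ i, Tendsto (fun n => u n (x i) - c n) atTop (𝓝 (w (x i))) :=
    ae_all_iff.2 fun i => Measure.tendsto_eval_ae_ae (μ := fun _ : ι => μ) (i := i) hw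
  have := ae_neBot.2 (Measure.pi_ne_zero fun _ : ι => hμ)
  obtain ⟨x, ⟨L, hL⟩, hx⟩ := (hsum.and hw_pi).exists
  have hc : Tendsto c atTop (𝓝 ((L - ∑ i, w (x i)) / Fintype.card ι)) := by
    refine ((hL.sub (tendsto_finsetSum _ fun i _ => hx i)).div_const _).congr fun n => ?_
    simp [Finset.sum_sub_distrib]
  exact ⟨fun t => w t + _, hw.mono fun t ht => (ht.add hc).congr fun n => sub_add_cancel _ _⟩

/-- If the arithmetic means `N⁻¹ ∑ᵢ uₙ(xᵢ)` converge a.e. on `Λ^N` to a finite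
function `U`, then the `uₙ` converge a.e. on `Λ` to some finite function `u`. -/
theorem ae_tendsto_of_mean_ae_tendsto
    {Λ : Type*} [MeasurableSpace Λ] (μ : Measure Λ) [SigmaFinite μ] (hμ : μ ≠ 0)
    (N : ℕ) (hN : 2 ≤ N) (u : ℕ → Λ → ℝ) (U : (Fin N → Λ) → ℝ)
    (h : ∀ᵐ x ∂(Measure.pi fun _ : Fin N => μ),
      Tendsto (fun n => (N : ℝ)⁻¹ * ∑ i, u n (x i)) atTop (nhds (U x))) :
    ∃ v : Λ → ℝ, ∀ᵐ t ∂μ, Tendsto (fun n => u n t) atTop (nhds (v t)) := by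
  obtain ⟨M, rfl⟩ : ∃ M, N = M + 1 := ⟨N - 1, by omega⟩
  have hsum : ∀ᵐ x ∂Measure.pi fun _ : Fin (M + 1) => μ,
      ∃ L, Tendsto (fun n => ∑ i, u n (x i)) atTop (𝓝 L) := by
    filter_upwards [h] with x hx
    have hM : (M : ℝ) + 1 ≠ 0 := by positivity
    exact ⟨_, by simpa [← mul_assoc, hM] using hx.const_mul ((M : ℝ) + 1)⟩
  obtain ⟨c, w, hw⟩ := exists_ae_tendsto_sub_of_ae_prod (Measure.pi_ne_zero fun _ => hμ)
    (g := fun n y => ∑ j : Fin M, u n (y j))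
    ((ae_prod_cons_of_ae_pi hsum).mono fun p hp => by simpa [Fin.sum_univ_succ] using hp)
  exact exists_ae_tendsto_of_ae_tendsto_sum hμ hsum hw
end

section
/- Let (Λ, dx) be a complete σ-finite measure space and 1 ≤ m ≤ N integers. A sequence (u_n) of finite real-valued functions on Λ^m converges a.e. on Λ^m to some finite function if and only if the sequence of generalized means (G_{N,m} u_n) converges a.e. on Λ^N to some finite function. -/
open MeasureTheory Filter
open Finset

/-- Transport of null sets under coordinate selection. -/
lemma null_comp_iff {Λ : Type*} [MeasurableSpace Λ] (μ : Measure Λ) [SigmaFinite μ]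
    (hμ : μ ≠ 0) {a b : ℕ} (f : Fin a → Fin b) (hf : Function.Injective f)
    (A : Set (Fin a → Λ)) :
    (Measure.pi fun _ : Fin b => μ) ((fun z : Fin b → Λ => z ∘ f) ⁻¹' A) = 0 ↔
      (Measure.pi fun _ : Fin a => μ) A = 0 := by
  classical
  set p : Fin b → Prop := fun i => i ∈ Set.range f with hp
  haveI Fp : Fintype (Subtype p) := Subtype.fintype p
  set e₀ : Fin a ≃ Subtype p := Equiv.ofInjective f hf with he₀
  set e₁ := MeasurableEquiv.piEquivPiSubtypeProd (fun _ : Fin b => Λ) p with he₁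
  set e₂ := MeasurableEquiv.piCongrLeft (fun _ : Subtype p => Λ) e₀ with he₂
  have hmp1 := measurePreserving_piEquivPiSubtypeProd (fun _ : Fin b => μ) p
  have hmp2 := measurePreserving_piCongrLeft (fun _ : Subtype p => μ) e₀
  set f' : Fin a → Subtype p := fun j => ⟨f j, ⟨j, rfl⟩⟩ with hf'
  have hset : (fun z : Fin b → Λ => z ∘ f) ⁻¹' A =
      e₁ ⁻¹' (((fun g : Subtype p → Λ => g ∘ f') ⁻¹' A) ×ˢ Set.univ) := by
    ext z
    simp only [Set.mem_preimage, Set.mem_prod, Set.mem_univ, and_true]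
    have : (e₁ z).1 ∘ f' = z ∘ f := rfl
    rw [this]
  have hset2 : e₂ ⁻¹' ((fun g : Subtype p → Λ => g ∘ f') ⁻¹' A) = A := by
    ext y
    simp only [Set.mem_preimage]
    have : (e₂ y) ∘ f' = y := by
      funext j
      have hj : f' j = e₀ j := by
        rw [he₀]; exact (Equiv.ofInjective_apply f hf j).symm
      show (e₂ y) (f' j) = y j
      rw [hj]
      exact Equiv.piCongrLeft_apply_apply (fun _ : Subtype p => Λ) e₀ y j
    rw [this]
  have hpi : ∀ (F F' : Fintype (Subtype p)),
      (@Measure.pi (Subtype p) (fun _ => Λ) F (fun _ => inferInstance) (fun _ => μ)) =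
      (@Measure.pi (Subtype p) (fun _ => Λ) F' (fun _ => inferInstance) (fun _ => μ)) := by
    intro F F'
    congr!
  rw [hset, ← MeasurableEquiv.map_apply e₁, hmp1.map_eq, Measure.prod_prod,
    hpi _ Fp, ← hmp2.map_eq, MeasurableEquiv.map_apply, hset2]
  have hc : (Measure.pi fun _ : {i // ¬ p i} => μ) Set.univ ≠ 0 := by
    rw [Measure.pi_univ]
    rw [Finset.prod_ne_zero_iff]
    intro i _
    simpa [Measure.measure_univ_pos] using hμ
  constructor
  · intro h
    rcases mul_eq_zero.mp h with h' | h'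
    · exact h'
    · exact absurd h' hc
  · intro h; rw [h, zero_mul]


def Bcoef (N m j i : ℕ) : ℕ :=
  if j ≤ i ∧ i - j ≤ N - m then (m - j).choose (i - j) * ((N - m) + j).choose ((N - m) - (i - j))
  else 0

lemma L1 {M m N : ℕ} (hM : M = N + m) (hmN : m ≤ N) (s₀ s : Finset (Fin M))
    (hs₀ : s₀.card = m) (hs : s.card = m) (f : ℕ → ℝ) :
    ∑ σ ∈ (Finset.powersetCard N (Finset.univ : Finset (Fin M))).filter (fun σ => s ⊆ σ),
      f ((σ ∩ s₀).card)
    = ∑ i ∈ Finset.range (m + 1), (Bcoef N m ((s ∩ s₀).card) i : ℝ) * f i := by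
  classical
  set j := (s ∩ s₀).card with hj
  have hjm : j ≤ m := by
    rw [hj, ← hs]; exact card_le_card inter_subset_left
  set t : Finset (Fin M) := s₀ \ s with ht
  set W : Finset (Fin M) := Finset.univ \ s with hW
  have htW : t ⊆ W := sdiff_subset_sdiff (subset_univ _) (Subset.refl _)
  have htcard : t.card = m - j := by
    have h1 := card_sdiff_add_card_inter s₀ s
    have h2 : s₀ ∩ s = s ∩ s₀ := inter_comm _ _
    rw [h2, hs₀, ← hj] at h1
    rw [ht]
    omega
  have hWcard : W.card = N := by
    rw [hW, card_sdiff_of_subset (subset_univ s), card_univ, Fintype.card_fin, hs, hM]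
    omega
  -- step 1 : reindex σ ↦ σ \ s
  have step1 : ∑ σ ∈ (Finset.powersetCard N (Finset.univ : Finset (Fin M))).filter
        (fun σ => s ⊆ σ), f ((σ ∩ s₀).card)
      = ∑ R ∈ Finset.powersetCard (N - m) W, f (j + (R ∩ t).card) := by
    refine Finset.sum_nbij' (fun σ => σ \ s) (fun R => s ∪ R) ?_ ?_ ?_ ?_ ?_
    · intro σ hσ
      rw [mem_filter, Finset.mem_powersetCard] at hσ
      obtain ⟨⟨_, hcard⟩, hsub⟩ := hσ
      rw [Finset.mem_powersetCard]
      exact ⟨sdiff_subset_sdiff (subset_univ _) (Subset.refl _),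
        by rw [card_sdiff_of_subset hsub, hcard, hs]⟩
    · intro R hR
      rw [Finset.mem_powersetCard] at hR
      obtain ⟨hRW, hRcard⟩ := hR
      have hdisj : Disjoint s R := by
        refine Finset.disjoint_left.mpr fun x hx hxR => ?_
        have := hRW hxR
        rw [hW, Finset.mem_sdiff] at this
        exact this.2 hx
      rw [mem_filter, Finset.mem_powersetCard]
      refine ⟨⟨subset_univ _, ?_⟩, subset_union_left⟩
      rw [card_union_of_disjoint hdisj, hs, hRcard]
      omega
    · intro σ hσ
      rw [mem_filter, Finset.mem_powersetCard] at hσ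
      exact union_sdiff_of_subset hσ.2
    · intro R hR
      rw [Finset.mem_powersetCard] at hR
      refine union_sdiff_cancel_left (Finset.disjoint_left.mpr fun x hx hxR => ?_)
      have := hR.1 hxR
      rw [hW, Finset.mem_sdiff] at this
      exact this.2 hx
    · intro σ hσ
      rw [mem_filter, Finset.mem_powersetCard] at hσ
      obtain ⟨⟨_, hcard⟩, hsub⟩ := hσ
      congr 1
      have hset : σ ∩ s₀ = (s ∩ s₀) ∪ ((σ \ s) ∩ t) := by
        ext x
        have hx := @hsub x
        simp only [Finset.mem_inter, Finset.mem_union, Finset.mem_sdiff, ht]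
        tauto
      have hdisjss : Disjoint (s ∩ s₀) ((σ \ s) ∩ t) := by
        refine Finset.disjoint_left.mpr fun x hx hx2 => ?_
        rw [Finset.mem_inter] at hx
        rw [Finset.mem_inter, Finset.mem_sdiff] at hx2
        exact hx2.1.2 hx.1
      rw [hset, card_union_of_disjoint hdisjss]
  rw [step1]
  -- step 2 : fiber the sum over K = R ∩ t
  rw [← Finset.sum_fiberwise_of_maps_to (g := fun R => R ∩ t) (t := t.powerset)
      (fun R _ => mem_powerset.mpr inter_subset_right) (fun R => f (j + (R ∩ t).card))]
  have step2 : ∀ K ∈ t.powerset,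
      ∑ R ∈ (Finset.powersetCard (N - m) W).filter (fun R => R ∩ t = K), f (j + (R ∩ t).card)
      = ((Finset.powersetCard (N - m) W).filter (fun R => R ∩ t = K)).card • f (j + K.card) := by
    intro K _
    rw [← Finset.sum_const]
    refine Finset.sum_congr rfl fun R hR => ?_
    rw [(Finset.mem_filter.mp hR).2]
  rw [Finset.sum_congr rfl step2]
  -- step 3 : the cardinality of each fiber
  have fibcard : ∀ K ∈ t.powerset,
      ((Finset.powersetCard (N - m) W).filter (fun R => R ∩ t = K)).card
      = if K.card ≤ N - m then (N - m + j).choose (N - m - K.card) else 0 := by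
    intro K hK
    rw [mem_powerset] at hK
    by_cases hKle : K.card ≤ N - m
    · rw [if_pos hKle]
      have hbij : ((Finset.powersetCard (N - m) W).filter (fun R => R ∩ t = K)).card
          = (Finset.powersetCard (N - m - K.card) (W \ t)).card := by
        refine Finset.card_bij' (fun R _ => R \ t) (fun R' _ => R' ∪ K) ?_ ?_ ?_ ?_
        · intro R hR
          rw [Finset.mem_filter, Finset.mem_powersetCard] at hR
          obtain ⟨⟨hRW, hRcard⟩, hRK⟩ := hR
          rw [Finset.mem_powersetCard]
          refine ⟨sdiff_subset_sdiff hRW (Subset.refl _), ?_⟩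
          have h1 := card_sdiff_add_card_inter R t
          rw [hRK, hRcard] at h1
          show (R \ t).card = N - m - K.card
          omega
        · intro R' hR'
          rw [Finset.mem_powersetCard] at hR'
          obtain ⟨hR'Wt, hR'card⟩ := hR'
          have hdisjt : Disjoint R' t := Finset.disjoint_left.mpr fun x hx hxt =>
            (Finset.mem_sdiff.mp (hR'Wt hx)).2 hxt
          have hdisjK : Disjoint R' K := hdisjt.mono_right hK
          rw [Finset.mem_filter, Finset.mem_powersetCard]
          refine ⟨⟨?_, ?_⟩, ?_⟩
          · exact union_subset (hR'Wt.trans sdiff_subset) (hK.trans htW)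
          · rw [card_union_of_disjoint hdisjK, hR'card]
            omega
          · rw [union_inter_distrib_right,
              Finset.disjoint_iff_inter_eq_empty.mp hdisjt, empty_union,
              inter_eq_left.mpr hK]
        · intro R hR
          rw [Finset.mem_filter] at hR
          show R \ t ∪ K = R
          rw [← hR.2, sdiff_union_inter]
        · intro R' hR'
          rw [Finset.mem_powersetCard] at hR'
          have hdisjt : Disjoint R' t := Finset.disjoint_left.mpr fun x hx hxt =>
            (Finset.mem_sdiff.mp (hR'.1 hx)).2 hxt
          show (R' ∪ K) \ t = R'
          rw [union_sdiff_distrib, sdiff_eq_self_of_disjoint hdisjt,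
            sdiff_eq_empty_iff_subset.mpr hK, union_empty]
      rw [hbij, Finset.card_powersetCard]
      congr 1
      rw [card_sdiff_of_subset htW, hWcard, htcard]
      omega
    · rw [if_neg hKle, Finset.card_eq_zero, Finset.filter_eq_empty_iff]
      intro R hR hRK
      rw [Finset.mem_powersetCard] at hR
      apply hKle
      rw [← hRK]
      calc (R ∩ t).card ≤ R.card := card_le_card inter_subset_left
        _ = N - m := hR.2
  rw [Finset.sum_congr rfl fun K hK => by rw [fibcard K hK]]
  -- step 4 : group subsets of t by cardinality
  rw [Finset.sum_powerset_apply_card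
    (fun k => (if k ≤ N - m then (N - m + j).choose (N - m - k) else 0) • f (j + k))]
  -- step 5 : reindex k ↦ j + k
  rw [htcard]
  have hzero : ∀ i ∈ Finset.range (m + 1),
      i ∉ (Finset.range (m + 1)).filter (fun i => j ≤ i) → (Bcoef N m j i : ℝ) * f i = 0 := by
    intro i hi hni
    rw [Finset.mem_filter, not_and] at hni
    have : ¬ j ≤ i := hni hi
    rw [Bcoef, if_neg (by tauto)]
    simp
  rw [← Finset.sum_subset (Finset.filter_subset _ _) hzero]
  refine Finset.sum_nbij' (fun k => j + k) (fun i => i - j) ?_ ?_ ?_ ?_ ?_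
  · intro k hk
    rw [Finset.mem_range] at hk
    simp only [Finset.mem_filter, Finset.mem_range]
    omega
  · intro i hi
    simp only [Finset.mem_filter, Finset.mem_range] at hi
    simp only [Finset.mem_range]
    omega
  · intro k hk
    omega
  · intro i hi
    simp only [Finset.mem_filter] at hi
    omega
  · intro k hk
    rw [Finset.mem_range] at hk
    show _ = (Bcoef N m j (j + k) : ℝ) * f (j + k)
    rw [Bcoef]
    have h1 : j + k - j = k := by omega
    rw [h1]
    by_cases hkN : k ≤ N - m
    · rw [if_pos hkN, if_pos (⟨Nat.le_add_right j k, hkN⟩ : j ≤ j + k ∧ k ≤ N - m)]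
      push_cast [smul_eq_mul]
      ring
    · rw [if_neg hkN, if_neg (fun h : j ≤ j + k ∧ k ≤ N - m => hkN h.2)]
      simp

lemma exists_coeffs {M m N : ℕ} (hM : M = N + m) (hmN : m ≤ N) (s₀ : Finset (Fin M))
    (hs₀ : s₀.card = m) :
    ∃ c : Finset (Fin M) → ℝ, ∀ s ∈ Finset.powersetCard m (Finset.univ : Finset (Fin M)),
      ∑ σ ∈ (Finset.powersetCard N (Finset.univ : Finset (Fin M))).filter (fun σ => s ⊆ σ), c σ
      = if s = s₀ then 1 else 0 := by
  classical
  set T : Matrix (Fin (m+1)) (Fin (m+1)) ℝ := fun j i => (Bcoef N m j i : ℝ) with hT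
  have htri : T.BlockTriangular id := by
    intro i j hij
    have hij' : (j : ℕ) < (i : ℕ) := hij
    simp only [hT, Bcoef]
    rw [if_neg (fun h => absurd h.1 (by omega))]
    simp
  have hdiag : ∀ i : Fin (m+1), T i i ≠ 0 := by
    intro i
    simp only [hT, Bcoef]
    rw [if_pos ⟨le_refl _, by omega⟩]
    have h1 : (m - (i:ℕ)).choose ((i:ℕ) - i) = 1 := by
      rw [Nat.sub_self, Nat.choose_zero_right]
    have h2 : 0 < (N - m + (i:ℕ)).choose (N - m - ((i:ℕ) - i)) := by
      rw [Nat.sub_self, Nat.sub_zero]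
      exact Nat.choose_pos (Nat.le_add_right _ _)
    positivity
  have hdet : T.det ≠ 0 := by
    rw [Matrix.det_of_upperTriangular htri]
    exact Finset.prod_ne_zero_iff.mpr fun i _ => hdiag i
  set δv : Fin (m+1) → ℝ := fun j => if (j : ℕ) = m then 1 else 0 with hδv
  set fv : Fin (m+1) → ℝ := T⁻¹.mulVec δv with hfv
  have hsolve : ∀ jf : Fin (m+1), ∑ i : Fin (m+1), T jf i * fv i = δv jf := by
    intro jf
    have : (T.mulVec fv) jf = δv jf := by
      rw [hfv, Matrix.mulVec_mulVec, Matrix.mul_nonsing_inv _ (isUnit_iff_ne_zero.mpr hdet),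
        Matrix.one_mulVec]
    rw [← this]
    rfl
  set fN : ℕ → ℝ := fun i => if h : i ≤ m then fv ⟨i, by omega⟩ else 0 with hfN
  refine ⟨fun σ => fN ((σ ∩ s₀).card), fun s hsmem => ?_⟩
  rw [Finset.mem_powersetCard] at hsmem
  have hs : s.card = m := hsmem.2
  have hjm : (s ∩ s₀).card ≤ m := by
    rw [← hs]; exact Finset.card_le_card Finset.inter_subset_left
  rw [L1 hM hmN s₀ s hs₀ hs fN]
  have hrange : ∑ i ∈ Finset.range (m + 1), (Bcoef N m ((s ∩ s₀).card) i : ℝ) * fN i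
      = ∑ i : Fin (m+1), T ⟨(s ∩ s₀).card, by omega⟩ i * fv i := by
    rw [← Fin.sum_univ_eq_sum_range (fun i => (Bcoef N m ((s ∩ s₀).card) i : ℝ) * fN i)]
    refine Finset.sum_congr rfl fun i _ => ?_
    have : fN (i : ℕ) = fv i := by
      rw [hfN]
      simp only [dif_pos (Nat.lt_succ_iff.mp i.2)]
    rw [this]
  rw [hrange, hsolve]
  rw [hδv]
  simp only []
  by_cases hcase : s = s₀
  · rw [if_pos hcase, if_pos]
    simp [hcase, Finset.inter_self, hs₀]
  · rw [if_neg hcase, if_neg]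
    intro hcard
    apply hcase
    have h1 : s ∩ s₀ = s₀ := by
      apply Finset.eq_of_subset_of_card_le Finset.inter_subset_right
      rw [hcard, hs₀]
    have h2 : s₀ ⊆ s := by
      rw [← h1]; exact Finset.inter_subset_left
    exact (Finset.eq_of_subset_of_card_le h2 (by rw [hs, hs₀])).symm


/-- The generalized `N`-mean of order `m` with kernel `u`. -/
noncomputable def genMean {Λ : Type*} (N m : ℕ) (u : (Fin m → Λ) → ℝ) :
    (Fin N → Λ) → ℝ :=
  fun x => (N.choose m : ℝ)⁻¹ *
    ∑ s ∈ (Finset.powersetCard m (Finset.univ : Finset (Fin N))).attach,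
      u (fun i => x (s.1.orderEmbOfFin (Finset.mem_powersetCard_univ.mp s.2) i))

noncomputable def blockSum {Λ : Type*} (m : ℕ) (u : (Fin m → Λ) → ℝ) {M : ℕ}
    (z : Fin M → Λ) (s : Finset (Fin M)) : ℝ :=
  if h : s.card = m then u (z ∘ s.orderEmbOfFin h) else 0

noncomputable def gsel {Λ : Type*} (N m : ℕ) (u : (Fin m → Λ) → ℝ) {M : ℕ}
    (z : Fin M → Λ) (σ : Finset (Fin M)) : ℝ :=
  if h : σ.card = N then genMean N m u (z ∘ σ.orderEmbOfFin h) else 0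

lemma genMean_eq_blockSum {Λ : Type*} (N m : ℕ) (u : (Fin m → Λ) → ℝ) (w : Fin N → Λ) :
    genMean N m u w = (N.choose m : ℝ)⁻¹ *
      ∑ t ∈ Finset.powersetCard m (Finset.univ : Finset (Fin N)), blockSum m u w t := by
  rw [genMean]
  congr 1
  rw [← Finset.sum_attach (Finset.powersetCard m (Finset.univ : Finset (Fin N)))
    (fun t => blockSum m u w t)]
  refine Finset.sum_congr rfl fun t _ => ?_
  rw [blockSum, dif_pos (Finset.mem_powersetCard_univ.mp t.2)]
  rfl

lemma blockSum_comp {Λ : Type*} (m : ℕ) (u : (Fin m → Λ) → ℝ) {M N : ℕ}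
    (z : Fin M → Λ) (σ : Finset (Fin M)) (hσ : σ.card = N) (t : Finset (Fin N)) :
    blockSum m u (z ∘ σ.orderEmbOfFin hσ) t
      = blockSum m u z (t.map (σ.orderEmbOfFin hσ).toEmbedding) := by
  by_cases h : t.card = m
  · have hmap : (t.map (σ.orderEmbOfFin hσ).toEmbedding).card = m := by
      rw [Finset.card_map, h]
    rw [blockSum, blockSum, dif_pos h, dif_pos hmap]
    have hemb : (σ.orderEmbOfFin hσ) ∘ (t.orderEmbOfFin h)
        = (t.map (σ.orderEmbOfFin hσ).toEmbedding).orderEmbOfFin hmap := by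
      refine Finset.orderEmbOfFin_unique hmap ?_ ?_
      · intro x
        exact Finset.mem_map_of_mem _ (Finset.orderEmbOfFin_mem t h x)
      · exact (σ.orderEmbOfFin hσ).strictMono.comp (t.orderEmbOfFin h).strictMono
    rw [← hemb]
    rfl
  · have hmap : ¬ (t.map (σ.orderEmbOfFin hσ).toEmbedding).card = m := by
      rw [Finset.card_map]; exact h
    rw [blockSum, blockSum, dif_neg h, dif_neg hmap]

lemma image_map_powersetCard {M N m : ℕ} (σ : Finset (Fin M)) (hσ : σ.card = N) :
    Finset.image (fun t => t.map (σ.orderEmbOfFin hσ).toEmbedding)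
        (Finset.powersetCard m (Finset.univ : Finset (Fin N)))
      = (Finset.powersetCard m (Finset.univ : Finset (Fin M))).filter (fun s => s ⊆ σ) := by
  ext s
  simp only [Finset.mem_image, Finset.mem_filter, Finset.mem_powersetCard_univ]
  constructor
  · rintro ⟨t, ht, rfl⟩
    refine ⟨by rw [Finset.card_map, ht], fun x hx => ?_⟩
    rw [Finset.mem_map] at hx
    obtain ⟨i, _, rfl⟩ := hx
    exact Finset.orderEmbOfFin_mem σ hσ i
  · rintro ⟨hcard, hsub⟩
    classical
    refine ⟨Finset.univ.filter (fun i : Fin N => σ.orderEmbOfFin hσ i ∈ s), ?_, ?_⟩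
    · have hmapeq : (Finset.univ.filter (fun i : Fin N => σ.orderEmbOfFin hσ i ∈ s)).map
          (σ.orderEmbOfFin hσ).toEmbedding = s := by
        ext x
        simp only [Finset.mem_map, Finset.mem_filter, Finset.mem_univ, true_and]
        constructor
        · rintro ⟨i, hi, rfl⟩; exact hi
        · intro hx
          have : x ∈ Set.range (σ.orderEmbOfFin hσ) := by
            rw [Finset.range_orderEmbOfFin]
            exact hsub hx
          obtain ⟨i, rfl⟩ := this
          exact ⟨i, hx, rfl⟩
      have := congrArg Finset.card hmapeq
      rw [Finset.card_map] at this
      rw [this, hcard]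
    · ext x
      simp only [Finset.mem_map, Finset.mem_filter, Finset.mem_univ, true_and]
      constructor
      · rintro ⟨i, hi, rfl⟩; exact hi
      · intro hx
        have : x ∈ Set.range (σ.orderEmbOfFin hσ) := by
          rw [Finset.range_orderEmbOfFin]
          exact hsub hx
        obtain ⟨i, rfl⟩ := this
        exact ⟨i, hx, rfl⟩

lemma gsel_eq {Λ : Type*} {M N m : ℕ} (u : (Fin m → Λ) → ℝ) (z : Fin M → Λ)
    (σ : Finset (Fin M)) (hσ : σ.card = N) (hmN : m ≤ N) :
    (N.choose m : ℝ) * gsel N m u z σ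
      = ∑ s ∈ (Finset.powersetCard m (Finset.univ : Finset (Fin M))).filter (fun s => s ⊆ σ),
          blockSum m u z s := by
  rw [gsel, dif_pos hσ, genMean_eq_blockSum, ← mul_assoc,
    mul_inv_cancel₀ (by exact_mod_cast (Nat.choose_pos hmN).ne'), one_mul]
  rw [← image_map_powersetCard σ hσ, Finset.sum_image]
  · exact Finset.sum_congr rfl fun t _ => blockSum_comp m u z σ hσ t
  · intro t1 _ t2 _ h
    exact Finset.map_injective _ h

lemma swap_sum {Λ : Type*} {M m N : ℕ} (c : Finset (Fin M) → ℝ) (u : (Fin m → Λ) → ℝ)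
    (z : Fin M → Λ) :
    ∑ σ ∈ Finset.powersetCard N (Finset.univ : Finset (Fin M)), c σ *
      (∑ s ∈ (Finset.powersetCard m (Finset.univ : Finset (Fin M))).filter (fun s => s ⊆ σ),
        blockSum m u z s)
    = ∑ s ∈ Finset.powersetCard m (Finset.univ : Finset (Fin M)),
        (∑ σ ∈ (Finset.powersetCard N (Finset.univ : Finset (Fin M))).filter (fun σ => s ⊆ σ),
          c σ) * blockSum m u z s := by
  classical
  simp only [Finset.sum_filter, Finset.mul_sum, Finset.sum_mul]
  rw [Finset.sum_comm]
  refine Finset.sum_congr rfl fun s _ => Finset.sum_congr rfl fun σ _ => ?_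
  split <;> ring


lemma key_identity {Λ : Type*} {M m N : ℕ} (hmN : m ≤ N)
    (s₀ : Finset (Fin M)) (hs₀ : s₀.card = m)
    (c : Finset (Fin M) → ℝ)
    (hc : ∀ s ∈ Finset.powersetCard m (Finset.univ : Finset (Fin M)),
      ∑ σ ∈ (Finset.powersetCard N (Finset.univ : Finset (Fin M))).filter (fun σ => s ⊆ σ), c σ
      = if s = s₀ then 1 else 0)
    (u : (Fin m → Λ) → ℝ) (z : Fin M → Λ) :
    u (z ∘ s₀.orderEmbOfFin hs₀)
      = ∑ σ ∈ Finset.powersetCard N (Finset.univ : Finset (Fin M)),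
          c σ * ((N.choose m : ℝ) * gsel N m u z σ) := by
  have h1 : ∀ σ ∈ Finset.powersetCard N (Finset.univ : Finset (Fin M)),
      c σ * ((N.choose m : ℝ) * gsel N m u z σ)
      = c σ * ∑ s ∈ (Finset.powersetCard m (Finset.univ : Finset (Fin M))).filter
          (fun s => s ⊆ σ), blockSum m u z s := by
    intro σ hσ
    rw [gsel_eq u z σ (Finset.mem_powersetCard_univ.mp hσ) hmN]
  rw [Finset.sum_congr rfl h1, swap_sum]
  have h2 : ∀ s ∈ Finset.powersetCard m (Finset.univ : Finset (Fin M)),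
      (∑ σ ∈ (Finset.powersetCard N (Finset.univ : Finset (Fin M))).filter
        (fun σ => s ⊆ σ), c σ) * blockSum m u z s
      = if s = s₀ then blockSum m u z s else 0 := by
    intro s hs
    rw [hc s hs]
    split <;> ring
  rw [Finset.sum_congr rfl h2, Finset.sum_ite_eq' _ s₀ (blockSum m u z),
    if_pos (Finset.mem_powersetCard_univ.mpr hs₀), blockSum, dif_pos hs₀]

/-- **Theorem 1.** A sequence of kernels converges a.e. on `Λ^m` to some finite
function iff the corresponding sequence of generalized `N`-means converges a.e. on `Λ^N`
to some finite function. -/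
theorem ae_tendsto_iff_genMean_ae_tendsto
    {Λ : Type*} [MeasurableSpace Λ] (μ : Measure Λ) [SigmaFinite μ] (hμ : μ ≠ 0)
    (N m : ℕ) (hm : 1 ≤ m) (hmN : m ≤ N) (u : ℕ → (Fin m → Λ) → ℝ) :
    (∃ v : (Fin m → Λ) → ℝ, ∀ᵐ y ∂(Measure.pi fun _ : Fin m => μ),
        Tendsto (fun n => u n y) atTop (nhds (v y))) ↔
    (∃ U : (Fin N → Λ) → ℝ, ∀ᵐ x ∂(Measure.pi fun _ : Fin N => μ),
        Tendsto (fun n => genMean N m (u n) x) atTop (nhds (U x))) := by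
  classical
  constructor
  · rintro ⟨v, hv⟩
    refine ⟨genMean N m v, ?_⟩
    set A : Set (Fin m → Λ) := {y | ¬ Tendsto (fun n => u n y) atTop (nhds (v y))} with hA
    have hA0 : (Measure.pi fun _ : Fin m => μ) A = 0 := by
      rw [ae_iff] at hv; exact hv
    have hall : ∀ᵐ x ∂(Measure.pi fun _ : Fin N => μ),
        ∀ t : {t // t ∈ Finset.powersetCard m (Finset.univ : Finset (Fin N))},
          Tendsto (fun n => blockSum m (u n) x t.1) atTop (nhds (blockSum m v x t.1)) := by
      rw [MeasureTheory.ae_all_iff]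
      intro t
      have hcard := Finset.mem_powersetCard_univ.mp t.2
      have hnull := (null_comp_iff μ hμ (t.1.orderEmbOfFin hcard)
        (t.1.orderEmbOfFin hcard).injective A).mpr hA0
      rw [ae_iff]
      refine measure_mono_null ?_ hnull
      intro x hx
      simp only [Set.mem_setOf_eq] at hx
      simp only [Set.mem_preimage, hA, Set.mem_setOf_eq]
      intro hten
      apply hx
      have h1 : ∀ n, blockSum m (u n) x t.1 = u n (x ∘ t.1.orderEmbOfFin hcard) := fun n => by
        rw [blockSum, dif_pos hcard]
      have h2 : blockSum m v x t.1 = v (x ∘ t.1.orderEmbOfFin hcard) := by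
        rw [blockSum, dif_pos hcard]
      rw [h2]
      exact Tendsto.congr (fun n => (h1 n).symm) hten
    filter_upwards [hall] with x hx
    simp only [genMean_eq_blockSum]
    exact Tendsto.const_mul _ (tendsto_finset_sum _ fun t ht => hx ⟨t, ht⟩)
  · rintro ⟨U, hU⟩
    set s₀ : Finset (Fin (N + m)) :=
      Finset.image (Fin.castLE (Nat.le_add_left m N)) Finset.univ with hs₀def
    have hs₀ : s₀.card = m := by
      rw [hs₀def, Finset.card_image_of_injective _ (Fin.castLE_injective _),
        Finset.card_univ, Fintype.card_fin]
    obtain ⟨c, hc⟩ := exists_coeffs (rfl : N + m = N + m) hmN s₀ hs₀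
    set B : Set (Fin N → Λ) :=
      {x | ¬ Tendsto (fun n => genMean N m (u n) x) atTop (nhds (U x))} with hB
    have hB0 : (Measure.pi fun _ : Fin N => μ) B = 0 := by
      rw [ae_iff] at hU; exact hU
    set Us : (Fin (N + m) → Λ) → Finset (Fin (N + m)) → ℝ :=
      fun z σ => if h : σ.card = N then U (z ∘ σ.orderEmbOfFin h) else 0 with hUs
    have hall : ∀ᵐ z ∂(Measure.pi fun _ : Fin (N + m) => μ),
        ∀ σ : {σ // σ ∈ Finset.powersetCard N (Finset.univ : Finset (Fin (N + m)))},
          Tendsto (fun n => gsel N m (u n) z σ.1) atTop (nhds (Us z σ.1)) := by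
      rw [MeasureTheory.ae_all_iff]
      intro σ
      have hcard := Finset.mem_powersetCard_univ.mp σ.2
      have hnull := (null_comp_iff μ hμ (σ.1.orderEmbOfFin hcard)
        (σ.1.orderEmbOfFin hcard).injective B).mpr hB0
      rw [ae_iff]
      refine measure_mono_null ?_ hnull
      intro z hz
      simp only [Set.mem_setOf_eq] at hz
      simp only [Set.mem_preimage, hB, Set.mem_setOf_eq]
      intro hten
      apply hz
      have h1 : ∀ n, gsel N m (u n) z σ.1
          = genMean N m (u n) (z ∘ σ.1.orderEmbOfFin hcard) := fun n => by
        rw [gsel, dif_pos hcard]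
      have h2 : Us z σ.1 = U (z ∘ σ.1.orderEmbOfFin hcard) := by
        simp only [hUs]
        rw [dif_pos hcard]
      rw [h2]
      exact Tendsto.congr (fun n => (h1 n).symm) hten
    have hconv : ∀ᵐ z ∂(Measure.pi fun _ : Fin (N + m) => μ),
        ∃ L, Tendsto (fun n => u n (z ∘ s₀.orderEmbOfFin hs₀)) atTop (nhds L) := by
      filter_upwards [hall] with z hz
      refine ⟨∑ σ ∈ Finset.powersetCard N (Finset.univ : Finset (Fin (N + m))),
        c σ * ((N.choose m : ℝ) * Us z σ), ?_⟩
      refine Tendsto.congr (fun n => (key_identity hmN s₀ hs₀ c hc (u n) z).symm) ?_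
      exact tendsto_finset_sum _ fun σ hσ =>
        Tendsto.const_mul _ (Tendsto.const_mul _ (hz ⟨σ, hσ⟩))
    set Good : Set (Fin m → Λ) :=
      {y | ∃ L, Tendsto (fun n => u n y) atTop (nhds L)} with hGood
    have hGnull : (Measure.pi fun _ : Fin m => μ) Goodᶜ = 0 := by
      refine (null_comp_iff μ hμ (s₀.orderEmbOfFin hs₀)
        (s₀.orderEmbOfFin hs₀).injective Goodᶜ).mp ?_
      rw [ae_iff] at hconv
      refine measure_mono_null ?_ hconv
      intro z hz
      simp only [Set.mem_preimage, Set.mem_compl_iff, hGood, Set.mem_setOf_eq] at hz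
      simpa using hz
    refine ⟨fun y => limUnder atTop (fun n => u n y), ?_⟩
    have hae : ∀ᵐ y ∂(Measure.pi fun _ : Fin m => μ), y ∈ Good := by
      rw [ae_iff]
      exact hGnull
    filter_upwards [hae] with y hy
    obtain ⟨L, hL⟩ := hy
    rwa [hL.limUnder_eq]
end

section
/- Let (Λ, dx) be a complete σ-finite measure space with nonzero measure, 1 ≤ m ≤ N integers, and u : Λ^m → ℝ. Then U = G_{N,m} u is d^N x-measurable if and only if u is d^m x-measurable. -/
open MeasureTheory

section Aux

variable {Λ : Type*} [MeasurableSpace Λ]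

/-- Precomposition with an injective index map is measure preserving for products of a
probability measure. -/
lemma measurePreserving_comp_of_injective (μ : Measure Λ) [IsProbabilityMeasure μ]
    {a b : ℕ} {σ : Fin a → Fin b} (hσ : Function.Injective σ) :
    MeasurePreserving (fun x : Fin b → Λ => x ∘ σ)
      (Measure.pi fun _ : Fin b => μ) (Measure.pi fun _ : Fin a => μ) := by
  classical
  have hmeas : Measurable fun (x : Fin b → Λ) => x ∘ σ :=
    measurable_pi_lambda _ fun i => measurable_pi_apply _
  refine ⟨hmeas, ?_⟩
  refine (Measure.pi_eq (μ := fun _ : Fin a => μ) fun S hS => ?_).symm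
  rw [Measure.map_apply hmeas (MeasurableSet.univ_pi hS)]
  set T : Fin b → Set Λ := fun j => ⋂ (i : Fin a) (_ : σ i = j), S i with hT
  have hpre : (fun x : Fin b → Λ => x ∘ σ) ⁻¹' (Set.univ.pi S) = Set.univ.pi T := by
    ext x
    simp only [Set.mem_preimage, Set.mem_pi, Set.mem_univ, forall_true_left, Function.comp,
      Set.mem_iInter, hT]
    constructor
    · intro h j i hij; subst hij; exact h i
    · intro h i; exact h (σ i) i rfl
  rw [hpre, Measure.pi_pi]
  have h1 : ∀ i, T (σ i) = S i := by
    intro i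
    apply Set.Subset.antisymm
    · intro x hx
      exact Set.mem_iInter.mp (Set.mem_iInter.mp hx i) rfl
    · intro x hx
      refine Set.mem_iInter.2 fun i' => Set.mem_iInter.2 fun hi' => ?_
      have : i' = i := hσ hi'
      rw [this]; exact hx
  have h2 : ∀ j, j ∉ Finset.univ.image σ → T j = Set.univ := by
    intro j hj
    refine Set.eq_univ_of_forall fun x => Set.mem_iInter.2 fun i => Set.mem_iInter.2 fun hij => ?_
    exact absurd (hij ▸ Finset.mem_image_of_mem σ (Finset.mem_univ i)) hj
  calc ∏ j, μ (T j) = ∏ j ∈ Finset.univ.image σ, μ (T j) :=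
        (Finset.prod_subset (Finset.subset_univ _)
          (fun j _ hj => by rw [h2 j hj, measure_univ])).symm
    _ = ∏ i, μ (T (σ i)) := Finset.prod_image (fun i _ i' _ h => hσ h)
    _ = ∏ i, μ (S i) := by simp_rw [h1]

lemma aemeasurable_comp_inj (μ : Measure Λ) [IsProbabilityMeasure μ]
    {a b : ℕ} {f : (Fin a → Λ) → ℝ}
    (hf : AEMeasurable f (Measure.pi fun _ : Fin a => μ))
    {σ : Fin a → Fin b} (hσ : Function.Injective σ) :
    AEMeasurable (fun x : Fin b → Λ => f (x ∘ σ)) (Measure.pi fun _ : Fin b => μ) := by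
  have h := measurePreserving_comp_of_injective μ hσ
  have h2 : AEMeasurable f ((Measure.pi fun _ : Fin b => μ).map (fun x => x ∘ σ)) := by
    rw [h.map_eq]; exact hf
  exact h2.comp_measurable h.measurable

/-- `Fin.append` is measure preserving from the product of two pi-measures. -/
lemma measurePreserving_finAppend (μ : Measure Λ) [IsProbabilityMeasure μ] (a b : ℕ) :
    MeasurePreserving (fun p : ((Fin a → Λ) × (Fin b → Λ)) => Fin.append p.1 p.2)
      ((Measure.pi fun _ : Fin a => μ).prod (Measure.pi fun _ : Fin b => μ))
      (Measure.pi fun _ : Fin (a + b) => μ) := by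
  have hmeas : Measurable fun p : ((Fin a → Λ) × (Fin b → Λ)) => Fin.append p.1 p.2 := by
    refine measurable_pi_lambda _ fun i => ?_
    refine Fin.addCases (fun j => ?_) (fun j => ?_) i
    · simp only [Fin.append_left]
      exact (measurable_pi_apply j).comp measurable_fst
    · simp only [Fin.append_right]
      exact (measurable_pi_apply j).comp measurable_snd
  refine ⟨hmeas, ?_⟩
  refine (Measure.pi_eq (μ := fun _ : Fin (a + b) => μ) fun S hS => ?_).symm
  rw [Measure.map_apply hmeas (MeasurableSet.univ_pi hS)]
  have hpre : (fun p : ((Fin a → Λ) × (Fin b → Λ)) => Fin.append p.1 p.2) ⁻¹'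
      (Set.univ.pi S) =
      (Set.univ.pi (fun j => S (Fin.castAdd b j))) ×ˢ (Set.univ.pi (fun j => S (Fin.natAdd a j))) := by
    ext p
    simp only [Set.mem_preimage, Set.mem_pi, Set.mem_univ, forall_true_left, Set.mem_prod]
    constructor
    · intro hp
      constructor
      · intro j; have := hp (Fin.castAdd b j); rwa [Fin.append_left] at this
      · intro j; have := hp (Fin.natAdd a j); rwa [Fin.append_right] at this
    · rintro ⟨h1, h2⟩ i
      refine Fin.addCases (fun j => ?_) (fun j => ?_) i
      · rw [Fin.append_left]; exact h1 j
      · rw [Fin.append_right]; exact h2 j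
  rw [hpre, Measure.prod_prod, Measure.pi_pi, Measure.pi_pi]
  exact (Fin.prod_univ_add (fun i => μ (S i))).symm

/-- Sections of a.e.-measurable functions on `Λ^{a+b}` are a.e. measurable for a.e. value of
the last `b` coordinates. -/
lemma aemeasurable_append_section (μ : Measure Λ) [IsProbabilityMeasure μ] {a b : ℕ}
    {f : (Fin (a + b) → Λ) → ℝ}
    (hf : AEMeasurable f (Measure.pi fun _ : Fin (a + b) => μ)) :
    ∀ᵐ y ∂(Measure.pi fun _ : Fin b => μ),
      AEMeasurable (fun x : Fin a → Λ => f (Fin.append x y)) (Measure.pi fun _ : Fin a => μ) := by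
  have hΦ := measurePreserving_finAppend μ a b
  have h1 : AEMeasurable (fun p : ((Fin a → Λ) × (Fin b → Λ)) => f (Fin.append p.1 p.2))
      ((Measure.pi fun _ : Fin a => μ).prod (Measure.pi fun _ : Fin b => μ)) := by
    have : AEMeasurable f (((Measure.pi fun _ : Fin a => μ).prod
        (Measure.pi fun _ : Fin b => μ)).map (fun p : ((Fin a → Λ) × (Fin b → Λ)) =>
          Fin.append p.1 p.2)) := by
      rw [hΦ.map_eq]; exact hf
    exact this.comp_measurable hΦ.measurable
  have h2 : AEMeasurable (fun p : ((Fin b → Λ) × (Fin a → Λ)) => f (Fin.append p.2 p.1))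
      ((Measure.pi fun _ : Fin b => μ).prod (Measure.pi fun _ : Fin a => μ)) := by
    have hswap := Measure.measurePreserving_swap
      (μ := (Measure.pi fun _ : Fin b => μ)) (ν := (Measure.pi fun _ : Fin a => μ))
    have : AEMeasurable (fun p : ((Fin a → Λ) × (Fin b → Λ)) => f (Fin.append p.1 p.2))
        (((Measure.pi fun _ : Fin b => μ).prod (Measure.pi fun _ : Fin a => μ)).map Prod.swap) := by
      rw [hswap.map_eq]; exact h1
    exact this.comp_measurable measurable_swap
  obtain ⟨g, hg, hfg⟩ := h2
  have hae := Measure.ae_ae_of_ae_prod hfg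
  filter_upwards [hae] with y hy
  exact ⟨fun x => g (y, x), hg.comp measurable_prodMk_left, hy⟩

/-- Absolute continuity is preserved by finite products. -/
lemma pi_absolutelyContinuous {μ ν : Measure Λ} [SigmaFinite μ] [SigmaFinite ν]
    (h : μ ≪ ν) : ∀ k : ℕ,
    (Measure.pi fun _ : Fin k => μ) ≪ (Measure.pi fun _ : Fin k => ν) := by
  intro k
  induction k with
  | zero =>
    rw [Measure.pi_of_empty (fun _ : Fin 0 => μ), Measure.pi_of_empty (fun _ : Fin 0 => ν)]
  | succ n ih =>
    set e := MeasurableEquiv.piFinSuccAbove (fun _ : Fin (n + 1) => Λ) 0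
    have hμ := measurePreserving_piFinSuccAbove (fun _ : Fin (n + 1) => μ) 0
    have hν := measurePreserving_piFinSuccAbove (fun _ : Fin (n + 1) => ν) 0
    have hμ' : (Measure.pi fun _ : Fin (n + 1) => μ)
        = Measure.map e.symm (μ.prod (Measure.pi fun _ : Fin n => μ)) :=
      (hμ.symm e).map_eq.symm
    have hν' : (Measure.pi fun _ : Fin (n + 1) => ν)
        = Measure.map e.symm (ν.prod (Measure.pi fun _ : Fin n => ν)) :=
      (hν.symm e).map_eq.symm
    rw [hμ', hν']
    exact (h.prod ih).map e.symm.measurable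

end Aux

section SpanLemma

/-- The key algebraic lemma: if all "pool sums" `∑_{B ⊆ A, |B| = q} h B` over `p`-element
subsets `A` of a large enough base set belong to a submodule, then so does each individual
`h B₀`. -/
lemma span_lemma {ι : Type*} [DecidableEq ι] {F : Type*} [AddCommGroup F] [Module ℝ F]
    (Mss : Submodule ℝ F) :
    ∀ (q p : ℕ), q ≤ p → ∀ (s : Finset ι), p + q ≤ s.card → ∀ (h : Finset ι → F),
      (∀ A ⊆ s, A.card = p → (∑ B ∈ Finset.powersetCard q A, h B) ∈ Mss) →
      ∀ B₀ ⊆ s, B₀.card = q → h B₀ ∈ Mss := by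
  intro q
  induction q with
  | zero =>
    intro p _ s hcard h hP B₀ hB₀s hB₀c
    obtain ⟨A, hAs, hAc⟩ := Finset.exists_subset_card_eq (le_trans (Nat.le_add_right p 0) hcard)
    have hs := hP A hAs hAc
    rw [Finset.powersetCard_zero, Finset.sum_singleton] at hs
    rwa [Finset.card_eq_zero.mp hB₀c]
  | succ q IH =>
    intro p hqp s hcard h hP B₀ hB₀s hB₀c
    have key : ∀ (c : ι) (A' : Finset ι), c ∉ A' →
        ∑ B ∈ Finset.powersetCard (q + 1) (insert c A'), h B
          = (∑ B ∈ Finset.powersetCard (q + 1) A', h B)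
            + ∑ C ∈ Finset.powersetCard q A', h (insert c C) := by
      intro c A' hc
      rw [Finset.powersetCard_succ_insert hc, Finset.sum_union ?dis, Finset.sum_image ?inj]
      case dis =>
        rw [Finset.disjoint_left]
        intro t ht1 ht2
        obtain ⟨C, _, rfl⟩ := Finset.mem_image.mp ht2
        exact hc ((Finset.mem_powersetCard.mp ht1).1 (Finset.mem_insert_self c C))
      case inj =>
        intro C hC C' hC' hEq
        have hcC : c ∉ C := fun hcc => hc ((Finset.mem_powersetCard.mp hC).1 hcc)
        have hcC' : c ∉ C' := fun hcc => hc ((Finset.mem_powersetCard.mp hC').1 hcc)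
        calc C = (insert c C).erase c := (Finset.erase_insert hcC).symm
          _ = (insert c C').erase c := by rw [hEq]
          _ = C' := Finset.erase_insert hcC'
    -- Step 1: differences
    have hdiff : ∀ (C : Finset ι), C ⊆ s → C.card = q → ∀ a b, a ∈ s → b ∈ s → a ∉ C → b ∉ C →
        h (insert a C) - h (insert b C) ∈ Mss := by
      intro C hCs hCc a b ha hb haC hbC
      rcases eq_or_ne a b with rfl | hab
      · simpa using Mss.zero_mem
      · have hsub : ({a, b} : Finset ι) ⊆ s := by
          intro x hx
          rcases Finset.mem_insert.mp hx with rfl | hx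
          · exact ha
          · rw [Finset.mem_singleton.mp hx]; exact hb
        have hs' : (p - 1) + q ≤ (s \ {a, b}).card := by
          rw [Finset.card_sdiff_of_subset hsub, Finset.card_pair hab]; omega
        refine IH (p - 1) (by omega) (s \ {a, b}) hs'
          (fun C' => h (insert a C') - h (insert b C')) ?hyp C
          (Finset.subset_sdiff.mpr ⟨hCs, ?dis⟩) hCc
        case dis =>
          rw [Finset.disjoint_left]
          intro x hxC hxab
          rcases Finset.mem_insert.mp hxab with rfl | hxb
          · exact haC hxC
          · rw [Finset.mem_singleton.mp hxb] at hxC; exact hbC hxC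
        case hyp =>
          intro A' hA's hA'c
          have haA' : a ∉ A' := fun hmem => by
            have hx := hA's hmem
            rw [Finset.mem_sdiff] at hx
            exact hx.2 (Finset.mem_insert_self a {b})
          have hbA' : b ∉ A' := fun hmem => by
            have hx := hA's hmem
            rw [Finset.mem_sdiff] at hx
            exact hx.2 (by simp)
          have hins : ∀ c, c ∈ s → c ∉ A' → insert c A' ⊆ s ∧ (insert c A').card = p := by
            intro c hcs hcA'
            constructor
            · exact Finset.insert_subset hcs (hA's.trans Finset.sdiff_subset)
            · rw [Finset.card_insert_of_notMem hcA', hA'c]; omega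
          have ea := key a A' haA'
          have eb := key b A' hbA'
          have hEq : ∑ C' ∈ Finset.powersetCard q A', (h (insert a C') - h (insert b C'))
              = (∑ B ∈ Finset.powersetCard (q + 1) (insert a A'), h B)
                - (∑ B ∈ Finset.powersetCard (q + 1) (insert b A'), h B) := by
            rw [Finset.sum_sub_distrib, ea, eb]; abel
          rw [hEq]
          obtain ⟨ha1, ha2⟩ := hins a ha haA'
          obtain ⟨hb1, hb2⟩ := hins b hb hbA'
          exact sub_mem (hP _ ha1 ha2) (hP _ hb1 hb2)
    -- Step 2: telescoping
    have htel : ∀ (n : ℕ) (B B' : Finset ι), B ⊆ s → B' ⊆ s → B.card = q + 1 → B'.card = q + 1 →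
        (B \ B').card = n → h B - h B' ∈ Mss := by
      intro n
      induction n using Nat.strong_induction_on with
      | _ n IHn =>
        intro B B' hBs hB's hBc hB'c hn
        rcases eq_or_ne B B' with rfl | hne
        · simpa using Mss.zero_mem
        · have hBB' : (B \ B').Nonempty := by
            rw [Finset.sdiff_nonempty]
            intro hsubBB'
            exact hne (Finset.eq_of_subset_of_card_le hsubBB' (by omega))
          have hB'B : (B' \ B).Nonempty := by
            rw [Finset.sdiff_nonempty]
            intro hsubB'B
            exact hne (Finset.eq_of_subset_of_card_le hsubB'B (by omega)).symm
          obtain ⟨a, haBB'⟩ := hBB'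
          obtain ⟨b, hbB'B⟩ := hB'B
          have haB : a ∈ B := (Finset.mem_sdiff.mp haBB').1
          have haB' : a ∉ B' := (Finset.mem_sdiff.mp haBB').2
          have hbB' : b ∈ B' := (Finset.mem_sdiff.mp hbB'B).1
          have hbB : b ∉ B := (Finset.mem_sdiff.mp hbB'B).2
          have hCc : (B.erase a).card = q := by
            rw [Finset.card_erase_of_mem haB, hBc]; omega
          have hbe : b ∉ B.erase a := fun hmem => hbB (Finset.mem_of_mem_erase hmem)
          have h1 : h B - h (insert b (B.erase a)) ∈ Mss := by
            have hd := hdiff (B.erase a) ((Finset.erase_subset a B).trans hBs) hCc a b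
              (hBs haB) (hB's hbB') (Finset.notMem_erase a B) hbe
            rwa [Finset.insert_erase haB] at hd
          have hB''s : insert b (B.erase a) ⊆ s :=
            Finset.insert_subset (hB's hbB') ((Finset.erase_subset a B).trans hBs)
          have hB''c : (insert b (B.erase a)).card = q + 1 := by
            rw [Finset.card_insert_of_notMem hbe, hCc]
          have hsd : (insert b (B.erase a)) \ B' = (B \ B').erase a := by
            ext x
            simp only [Finset.mem_sdiff, Finset.mem_insert, Finset.mem_erase]
            constructor
            · rintro ⟨rfl | ⟨hxa, hxB⟩, hxB'⟩
              · exact absurd hbB' hxB'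
              · exact ⟨hxa, hxB, hxB'⟩
            · rintro ⟨hxa, hxB, hxB'⟩
              exact ⟨Or.inr ⟨hxa, hxB⟩, hxB'⟩
          have hnpos : 0 < n := by
            rw [← hn]
            exact Finset.card_pos.mpr ⟨a, haBB'⟩
          have hlt : ((B \ B').erase a).card < n := by
            rw [Finset.card_erase_of_mem haBB', hn]; omega
          have h2 : h (insert b (B.erase a)) - h B' ∈ Mss := by
            refine IHn _ ?_ _ _ hB''s hB's hB''c hB'c rfl
            rw [hsd]; exact hlt
          have hadd := add_mem h1 h2
          rwa [sub_add_sub_cancel] at hadd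
    -- Step 3: anchor
    obtain ⟨A, hAs, hAc⟩ := Finset.exists_subset_card_eq (show p ≤ s.card by omega)
    have hsum : (∑ B ∈ Finset.powersetCard (q + 1) A, (h B - h B₀)) ∈ Mss := by
      refine Submodule.sum_mem _ fun B hB => ?_
      obtain ⟨hBA, hBc⟩ := Finset.mem_powersetCard.mp hB
      exact htel _ B B₀ (hBA.trans hAs) hB₀s hBc hB₀c rfl
    have hPA := hP A hAs hAc
    have hmem := Mss.smul_mem ((p.choose (q + 1) : ℝ))⁻¹ (sub_mem hPA hsum)
    have heq : ((p.choose (q + 1) : ℝ))⁻¹ • ((∑ B ∈ Finset.powersetCard (q + 1) A, h B)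
        - ∑ B ∈ Finset.powersetCard (q + 1) A, (h B - h B₀)) = h B₀ := by
      have hinner : (∑ B ∈ Finset.powersetCard (q + 1) A, h B)
          - ∑ B ∈ Finset.powersetCard (q + 1) A, (h B - h B₀)
          = (Finset.powersetCard (q + 1) A).card • h B₀ := by
        rw [Finset.sum_sub_distrib, sub_sub_cancel, Finset.sum_const]
      rw [hinner, Finset.card_powersetCard, hAc, ← Nat.cast_smul_eq_nsmul ℝ, smul_smul,
        inv_mul_cancel₀ (Nat.cast_ne_zero.2 (Nat.choose_pos (by omega)).ne'), one_smul]
    rwa [heq] at hmem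

end SpanLemma

section OrderEmb

/-- Composition property of `orderEmbOfFin`. -/
lemma comp_orderEmbOfFin {α : Type*} [LinearOrder α] {N k : ℕ} (A : Finset α) (hA : A.card = N)
    (s : Finset (Fin N)) (hs : s.card = k) (B : Finset α) (hB : B.card = k)
    (hmem : ∀ i, A.orderEmbOfFin hA (s.orderEmbOfFin hs i) ∈ B) :
    ⇑(B.orderEmbOfFin hB) = ⇑(A.orderEmbOfFin hA) ∘ ⇑(s.orderEmbOfFin hs) :=
  (Finset.orderEmbOfFin_unique hB hmem
    ((A.orderEmbOfFin hA).strictMono.comp (s.orderEmbOfFin hs).strictMono)).symm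

end OrderEmb

section CoreThm

variable {Λ : Type*} [MeasurableSpace Λ]

theorem genMean_aemeasurable_iff_prob (μ : Measure Λ) [IsProbabilityMeasure μ]
    (N m : ℕ) (hmN : m ≤ N) (u : (Fin m → Λ) → ℝ) :
    AEMeasurable (genMean N m u) (Measure.pi fun _ : Fin N => μ) ↔
      AEMeasurable u (Measure.pi fun _ : Fin m => μ) := by
  set πN := Measure.pi fun _ : Fin N => μ with hπN
  set πm := Measure.pi fun _ : Fin m => μ with hπm
  set G : Finset (Fin N) → (Fin N → Λ) → ℝ :=
    fun t => if ht : t.card = m then (fun y => u (y ∘ t.orderEmbOfFin ht)) else 0 with hG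
  have hSU : ∀ y : Fin N → Λ, (∑ s ∈ (Finset.powersetCard m (Finset.univ : Finset (Fin N))).attach,
      u (fun i => y (s.1.orderEmbOfFin (Finset.mem_powersetCard_univ.mp s.2) i)))
      = ∑ t ∈ Finset.powersetCard m (Finset.univ : Finset (Fin N)), G t y := by
    intro y
    rw [← Finset.sum_attach (Finset.powersetCard m (Finset.univ : Finset (Fin N)))
      (fun t => G t y)]
    refine Finset.sum_congr rfl fun s _ => ?_
    rw [hG]
    simp only
    rw [dif_pos (Finset.mem_powersetCard_univ.mp s.2)]
    rfl
  have hgen : genMean N m u = fun y => ((N.choose m : ℝ))⁻¹ *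
      ∑ t ∈ Finset.powersetCard m (Finset.univ : Finset (Fin N)), G t y := by
    funext y
    rw [genMean, hSU y]
  have hchoose : ((N.choose m : ℝ)) ≠ 0 := Nat.cast_ne_zero.2 (Nat.choose_pos hmN).ne'
  have hiff1 : AEMeasurable (genMean N m u) πN ↔
      AEMeasurable (fun y => ∑ t ∈ Finset.powersetCard m (Finset.univ : Finset (Fin N)), G t y)
        πN := by
    constructor
    · intro hf
      have hf2 := hf.const_mul (N.choose m : ℝ)
      have heq : (fun y => (N.choose m : ℝ) * genMean N m u y)
          = fun y => ∑ t ∈ Finset.powersetCard m (Finset.univ : Finset (Fin N)), G t y := by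
        funext y
        rw [hgen, ← mul_assoc, mul_inv_cancel₀ hchoose, one_mul]
      rwa [heq] at hf2
    · intro hf
      rw [hgen]
      exact hf.const_mul _
  rw [hiff1]
  constructor
  · -- hard direction
    intro hS
    set πM := Measure.pi fun _ : Fin (m + N) => μ with hπM
    set hk : Finset (Fin (m + N)) → (Fin (m + N) → Λ) → ℝ :=
      fun B => if hB : B.card = m then (fun x => u (x ∘ B.orderEmbOfFin hB)) else 0 with hhk
    set Mss : Submodule ℝ ((Fin (m + N) → Λ) → ℝ) :=
      { carrier := {f | AEMeasurable f πM}
        add_mem' := fun hf hg => hf.add hg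
        zero_mem' := aemeasurable_const
        smul_mem' := fun c f hf => by
          simpa [Pi.smul_def, smul_eq_mul] using hf.const_mul c } with hMss
    have hMssMem : ∀ f : (Fin (m + N) → Λ) → ℝ, f ∈ Mss ↔ AEMeasurable f πM := fun f => Iff.rfl
    have hhyp : ∀ A ⊆ (Finset.univ : Finset (Fin (m + N))), A.card = N →
        (∑ B ∈ Finset.powersetCard m A, hk B) ∈ Mss := by
      intro A _ hAc
      have hAim : (Finset.univ : Finset (Fin N)).image (A.orderEmbOfFin hAc) = A := by
        apply Finset.coe_injective
        rw [Finset.coe_image, Finset.coe_univ, Set.image_univ, Finset.range_orderEmbOfFin]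
      have hinj := (A.orderEmbOfFin hAc).injective
      have hmemEq : (∑ B ∈ Finset.powersetCard m A, hk B)
          = (fun x : Fin (m + N) → Λ =>
            ∑ t ∈ Finset.powersetCard m (Finset.univ : Finset (Fin N)),
              G t (x ∘ A.orderEmbOfFin hAc)) := by
        funext x
        rw [Finset.sum_apply]
        refine (Finset.sum_bij
          (fun (t : Finset (Fin N)) (_ : t ∈ Finset.powersetCard m (Finset.univ : Finset (Fin N)))
            => t.image (A.orderEmbOfFin hAc)) ?hi ?inj ?surj ?val).symm
        case hi =>
          intro t ht
          refine Finset.mem_powersetCard.mpr ⟨?_, ?_⟩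
          · intro x hx
            obtain ⟨j, _, rfl⟩ := Finset.mem_image.mp hx
            exact Finset.orderEmbOfFin_mem A hAc j
          · rw [Finset.card_image_of_injective _ hinj]
            exact Finset.mem_powersetCard_univ.mp ht
        case inj =>
          intro t ht t' ht' hEq
          have hEq2 : t.image (A.orderEmbOfFin hAc) = t'.image (A.orderEmbOfFin hAc) := hEq
          ext i
          constructor
          · intro hi
            have hmem : A.orderEmbOfFin hAc i ∈ t'.image (A.orderEmbOfFin hAc) := by
              rw [← hEq2]; exact Finset.mem_image_of_mem _ hi
            obtain ⟨j, hj, hji⟩ := Finset.mem_image.mp hmem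
            rwa [← hinj hji]
          · intro hi
            have hmem : A.orderEmbOfFin hAc i ∈ t.image (A.orderEmbOfFin hAc) := by
              rw [hEq2]; exact Finset.mem_image_of_mem _ hi
            obtain ⟨j, hj, hji⟩ := Finset.mem_image.mp hmem
            rwa [← hinj hji]
        case surj =>
          intro B hB
          obtain ⟨hBA, hBc⟩ := Finset.mem_powersetCard.mp hB
          have hBsub : B ⊆ (Finset.univ : Finset (Fin N)).image (A.orderEmbOfFin hAc) := by
            rw [hAim]; exact hBA
          obtain ⟨t, hts, himg⟩ := Finset.subset_image_iff.mp hBsub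
          refine ⟨t, Finset.mem_powersetCard_univ.mpr ?_, himg⟩
          rw [← hBc, ← himg, Finset.card_image_of_injective _ hinj]
        case val =>
          intro t ht
          have htc := Finset.mem_powersetCard_univ.mp ht
          have hic : (t.image (A.orderEmbOfFin hAc)).card = m := by
            rw [Finset.card_image_of_injective _ hinj]; exact htc
          rw [hG, hhk]
          simp only
          rw [dif_pos htc, dif_pos hic, comp_orderEmbOfFin A hAc t htc _ hic
            (fun i => Finset.mem_image_of_mem _ (Finset.orderEmbOfFin_mem t htc i))]
          rfl
      rw [hMssMem, hmemEq]
      exact aemeasurable_comp_inj μ hS hinj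
    set B₀ : Finset (Fin (m + N)) := (Finset.univ : Finset (Fin m)).image (Fin.castAdd N)
      with hB₀
    have hB₀c : B₀.card = m := by
      rw [hB₀, Finset.card_image_of_injective _ (Fin.castAdd_injective m N),
        Finset.card_univ, Fintype.card_fin]
    have hspan := span_lemma Mss m N hmN (Finset.univ : Finset (Fin (m + N)))
      (by rw [Finset.card_univ, Fintype.card_fin]; omega) hk hhyp B₀ (Finset.subset_univ _) hB₀c
    have hemb : ⇑(B₀.orderEmbOfFin hB₀c) = Fin.castAdd N :=
      (Finset.orderEmbOfFin_unique hB₀c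
        (fun i => Finset.mem_image_of_mem _ (Finset.mem_univ i))
        (Fin.strictMono_castAdd N)).symm
    have hu' : AEMeasurable (fun x : Fin (m + N) → Λ => u (x ∘ Fin.castAdd N)) πM := by
      have hkB₀ : hk B₀ = fun x : Fin (m + N) → Λ => u (x ∘ Fin.castAdd N) := by
        rw [hhk]
        simp only
        rw [dif_pos hB₀c, hemb]
      rw [← hkB₀]
      exact (hMssMem _).mp hspan
    have hsec := aemeasurable_append_section μ hu'
    haveI : (ae (Measure.pi fun _ : Fin N => μ)).NeBot := IsProbabilityMeasure.ae_neBot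
    obtain ⟨y, hy⟩ := hsec.exists
    have hfinal : (fun x : Fin m → Λ => u ((Fin.append x y) ∘ Fin.castAdd N)) = u := by
      funext x
      congr 1
      funext i
      exact Fin.append_left x y i
    rwa [hfinal] at hy
  · -- easy direction
    intro hu
    refine Finset.aemeasurable_fun_sum _ fun t ht => ?_
    have htc := Finset.mem_powersetCard_univ.mp ht
    have : G t = fun y => u (y ∘ t.orderEmbOfFin htc) := by
      rw [hG]; simp only; rw [dif_pos htc]
    rw [this]
    exact aemeasurable_comp_inj μ hu (t.orderEmbOfFin htc).injective

end CoreThm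

/-- **Theorem 2(i).** `U = G_{N,m} u` is measurable with respect to the completed
product measure `d^N x` iff `u` is measurable with respect to `d^m x` (measurability with
respect to the completion being equivalent to a.e.-measurability). -/
theorem genMean_aemeasurable_iff
    {Λ : Type*} [MeasurableSpace Λ] (μ : Measure Λ) [SigmaFinite μ] (hμ : μ ≠ 0)
    (N m : ℕ) (hm : 1 ≤ m) (hmN : m ≤ N) (u : (Fin m → Λ) → ℝ) :
    AEMeasurable (genMean N m u) (Measure.pi fun _ : Fin N => μ) ↔
      AEMeasurable u (Measure.pi fun _ : Fin m => μ) := by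
  obtain ⟨ν₀, hfin, hμν₀, hν₀μ⟩ := exists_isFiniteMeasure_absolutelyContinuous μ
  have hν₀ne : ν₀ ≠ 0 := by
    rintro rfl
    exact hμ (Measure.measure_univ_eq_zero.mp (hμν₀ rfl))
  haveI : NeZero ν₀ := ⟨hν₀ne⟩
  set ν := (ν₀ Set.univ)⁻¹ • ν₀ with hν
  haveI : IsProbabilityMeasure ν := MeasureTheory.isProbabilityMeasureSMul
  have hμν : μ ≪ ν :=
    hμν₀.trans (Measure.absolutelyContinuous_smul
      (ENNReal.inv_ne_zero.2 (measure_ne_top ν₀ _)))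
  have hνμ : ν ≪ μ := (Measure.smul_absolutelyContinuous).trans hν₀μ
  have htrans : ∀ (k : ℕ) (f : (Fin k → Λ) → ℝ),
      AEMeasurable f (Measure.pi fun _ : Fin k => μ) ↔
        AEMeasurable f (Measure.pi fun _ : Fin k => ν) :=
    fun k f => ⟨fun hf => hf.mono_ac (pi_absolutelyContinuous hνμ k),
      fun hf => hf.mono_ac (pi_absolutelyContinuous hμν k)⟩
  rw [htrans N _, htrans m _]
  exact genMean_aemeasurable_iff_prob ν N m hmN u
end

section
/- Let (Λ, dx) be a complete σ-finite measure space with nonzero measure, N ≥ 2 an integer, and u : Λ → ℝ a function. If U = G_{N,1} u (so U(x_1,...,x_N) = N^{-1} Σ_i u(x_i)) belongs to L^∞(Λ^N; d^N x), then u ∈ L^∞(Λ; dx) and ‖u‖_{∞,dx} = ‖U‖_{∞,d^N x}. -/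
/-!
Averaging `u` over the `N` coordinates neither creates nor destroys essential bounds: if
`|u| ≤ c` a.e. then `|U| ≤ c` a.e. by the triangle inequality, and conversely if `u > c` on a set
`S` of positive measure then `U > c` on the box `S^N`, which has positive product measure.
Hence `u` and `U` have the same essential supremum. Measurability of `u` comes from slicing:
`N U(x) - ∑_{j ≠ 0} u(x_j) = u(x_0)`, and almost every slice in `(x_1, …, x_{N-1})` of an
a.e.-strongly measurable function on `Λ × Λ^{N-1}` is a.e.-strongly measurable.
-/

open MeasureTheory Finset
open scoped BigOperators ENNReal

namespace MeasureTheory.Measure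

variable {ι : Type*} [Fintype ι] {α : ι → Type*} [∀ i, MeasurableSpace (α i)]
  {μ : ∀ i, Measure (α i)} [∀ i, SigmaFinite (μ i)]

theorem pi_ne_zero_s9 (hμ : ∀ i, μ i ≠ 0) : Measure.pi μ ≠ 0 := by
  rw [← measure_univ_ne_zero, ← Set.pi_univ, pi_pi]
  exact prod_ne_zero_iff.2 fun i _ => measure_univ_ne_zero.2 (hμ i)

theorem ae_pi_forall {p : ∀ i, α i → Prop} (h : ∀ i, ∀ᵐ a ∂μ i, p i a) :
    ∀ᵐ x ∂Measure.pi μ, ∀ i, p i (x i) :=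
  ae_all_iff.2 fun i => tendsto_eval_ae_ae (h i)

theorem frequently_pi_forall {p : ∀ i, α i → Prop} (h : ∀ i, ∃ᵐ a ∂μ i, p i a) :
    ∃ᵐ x ∂Measure.pi μ, ∀ i, p i (x i) := by
  have hbox : {x : ∀ i, α i | ∀ i, p i (x i)} = Set.univ.pi fun i => {a | p i a} := by
    ext x
    simp
  rw [frequently_ae_iff, hbox, pi_pi]
  exact prod_ne_zero_iff.2 fun i _ => frequently_ae_iff.1 (h i)

end MeasureTheory.Measure

theorem MeasureTheory.eLpNormEssSup_eq_of_forall_ae_enorm_le_iff {α β ε ε' : Type*}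
    [MeasurableSpace α] [MeasurableSpace β] [TopologicalSpace ε] [ENorm ε]
    [TopologicalSpace ε'] [ENorm ε'] {μ : Measure α} {ν : Measure β} {f : α → ε} {g : β → ε'}
    (h : ∀ C : ℝ≥0∞, (∀ᵐ a ∂μ, ‖f a‖ₑ ≤ C) ↔ ∀ᵐ b ∂ν, ‖g b‖ₑ ≤ C) :
    eLpNormEssSup f μ = eLpNormEssSup g ν :=
  le_antisymm (eLpNormEssSup_le_of_ae_enorm_bound ((h _).2 ae_le_eLpNormEssSup))
    (eLpNormEssSup_le_of_ae_enorm_bound ((h _).1 ae_le_eLpNormEssSup))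

section Mean

variable {Λ : Type*} [MeasurableSpace Λ] {μ : Measure Λ} [SigmaFinite μ]

section Expect

variable {ι : Type*} [Fintype ι] [Nonempty ι]

theorem ae_le_of_ae_expect_le {u : Λ → ℝ} {c : ℝ}
    (h : ∀ᵐ x ∂Measure.pi fun _ : ι => μ, 𝔼 i, u (x i) ≤ c) : ∀ᵐ a ∂μ, u a ≤ c := by
  by_contra hu
  rw [Filter.not_eventually] at hu
  obtain ⟨x, hmean, hgt⟩ :=
    (h.and_frequently (Measure.frequently_pi_forall fun _ : ι => hu)).exists
  obtain ⟨i, -, hi⟩ := exists_le_of_expect_le univ_nonempty hmean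
  exact hgt i hi

theorem ae_abs_le_iff_ae_abs_expect_le (u : Λ → ℝ) (c : ℝ) :
    (∀ᵐ a ∂μ, |u a| ≤ c) ↔ ∀ᵐ x ∂Measure.pi fun _ : ι => μ, |𝔼 i, u (x i)| ≤ c := by
  refine ⟨fun h => ?_, fun h => ?_⟩
  · filter_upwards [Measure.ae_pi_forall fun _ => h] with x hx
    exact (abs_expect_le _ _).trans (expect_le univ_nonempty fun i _ => hx i)
  · have hle : ∀ᵐ a ∂μ, u a ≤ c :=
      ae_le_of_ae_expect_le <| h.mono fun x hx => (abs_le.1 hx).2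
    have hge : ∀ᵐ a ∂μ, -u a ≤ c := ae_le_of_ae_expect_le <| h.mono fun x hx => by
      rw [expect_neg_distrib]
      linarith [(abs_le.1 hx).1]
    filter_upwards [hle, hge] with a h₁ h₂
    exact abs_le.2 ⟨by linarith, h₁⟩

theorem eLpNorm_top_expect_comp_eval (u : Λ → ℝ) :
    eLpNorm (fun x : ι → Λ => 𝔼 i, u (x i)) ⊤ (Measure.pi fun _ => μ) = eLpNorm u ⊤ μ := by
  simp only [eLpNorm_exponent_top]
  refine eLpNormEssSup_eq_of_forall_ae_enorm_le_iff fun C => ?_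
  induction C using ENNReal.recTopCoe with
  | top => simp
  | coe c =>
    simp only [enorm_le_coe, ← NNReal.coe_le_coe, coe_nnnorm, Real.norm_eq_abs]
    exact (ae_abs_le_iff_ae_abs_expect_le u c).symm

end Expect

theorem aestronglyMeasurable_of_sum_comp_eval (hμ : μ ≠ 0) {n : ℕ} {u : Λ → ℝ}
    (hsum : AEStronglyMeasurable (fun x : Fin (n + 1) → Λ => ∑ i, u (x i))
      (Measure.pi fun _ => μ)) :
    AEStronglyMeasurable u μ := by
  set e := MeasurableEquiv.piFinSuccAbove (fun _ : Fin (n + 1) => Λ) 0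
  have he : MeasurePreserving e.symm (μ.prod (Measure.pi fun _ : Fin n => μ)) _ :=
    (measurePreserving_piFinSuccAbove (fun _ => μ) 0).symm
  have hslices := (hsum.comp_measurePreserving he).prodMk_right
  have := ae_neBot.2 (Measure.pi_ne_zero_s9 fun _ : Fin n => hμ)
  obtain ⟨y, hy⟩ := hslices.exists
  have hu : u = fun a => ∑ i, u (e.symm (a, y) i) - ∑ j, u (y j) := by
    ext a
    simp [e, MeasurableEquiv.piFinSuccAbove, Fin.insertNthEquiv, Fin.insertNth_zero',
      Fin.sum_univ_succ]
  rw [hu]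
  exact hy.sub aestronglyMeasurable_const

end Mean

/-- If `U(x₁,…,x_N) = N⁻¹ ∑ᵢ u(xᵢ)` is in `L^∞(Λ^N; d^N x)`, then
`u ∈ L^∞(Λ; dx)` and `‖u‖_{∞,dx} = ‖U‖_{∞,d^N x}`. -/
theorem memLp_top_of_mean_memLp_top
    {Λ : Type*} [MeasurableSpace Λ] (μ : Measure Λ) [SigmaFinite μ] (hμ : μ ≠ 0)
    (N : ℕ) (hN : 2 ≤ N) (u : Λ → ℝ) (U : (Fin N → Λ) → ℝ)
    (hU : ∀ x, U x = (N : ℝ)⁻¹ * ∑ i, u (x i))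
    (hUinf : MemLp U ⊤ (Measure.pi fun _ : Fin N => μ)) :
    MemLp u ⊤ μ ∧ eLpNorm u ⊤ μ = eLpNorm U ⊤ (Measure.pi fun _ : Fin N => μ) := by
  obtain ⟨n, rfl⟩ : ∃ n, N = n + 1 := ⟨N - 1, by omega⟩
  have hUmean : U = fun x => 𝔼 i, u (x i) := funext fun x => by
    rw [hU, Fintype.expect_eq_sum_div_card, Fintype.card_fin, inv_mul_eq_div]
  have hsum : (fun x : Fin (n + 1) → Λ => ∑ i, u (x i)) = fun x => ((n + 1 : ℕ) : ℝ) * U x :=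
    funext fun x => by rw [hU, mul_inv_cancel_left₀ (by positivity)]
  have hmeas : AEStronglyMeasurable u μ :=
    aestronglyMeasurable_of_sum_comp_eval hμ (hsum ▸ hUinf.1.const_mul _)
  have hnorm : eLpNorm u ⊤ μ = eLpNorm U ⊤ (Measure.pi fun _ => μ) := by
    rw [hUmean, eLpNorm_top_expect_comp_eval]
  exact ⟨⟨hmeas, hnorm ▸ hUinf.2⟩, hnorm⟩
end

section
/- Let (Λ, dx) be a complete σ-finite measure space with nonzero measure and 1 ≤ m ≤ N integers. Then there exists a constant C(N,m) > 0 such that for every u ∈ L^∞(Λ^m; d^m x), writing U = G_{N,m}u, one has ‖U‖_{∞,d^N x} ≤ ‖u‖_{∞,d^m x} ≤ C(N,m)‖U‖_{∞,d^N x}. In particular, G_{N,m} is a Banach space isomorphism from L^∞(Λ^m; d^m x) onto a closed subspace of L^∞(Λ^N; d^N x). -/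
open MeasureTheory
open scoped NNReal ENNReal

/-!
Work in `Λ^{2N}`. For `w ∈ Λ^{2N}` let `v_w(S) = u(w|_S)` on the `m`-subsets `S` of the `2N`
coordinates. Summing `v_w` over the `m`-subsets of an `N`-subset `A` gives `C(N,m) · U(w|_A)`.
This inclusion map from functions on `m`-sets to functions on `N`-sets is injective because
`2N` coordinates are available: for `t` on the `k`-subsets of an `n`-set with `2k < n`, the up
sums `(Wt)(A) = Σ_{T ⊆ A} t(T)` and down sums `(Dt)(R) = Σ_{T ⊇ R} t(T)` satisfy
`‖Wt‖² - ‖Dt‖² = (n - 2k) ‖t‖²`. Being an injective map of finite-dimensional spaces, it is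
bounded below, so `|u(w|_S)| ≤ c · Σ_A |U(w|_A)|` pointwise.

Restricting coordinates along an injection pushes the product measure forward to a nonzero
multiple of the smaller product measure (here `μ ≠ 0`), so it preserves essential suprema. This
turns the pointwise bound into `‖u‖_∞ ≤ C ‖U‖_∞`; the bound `‖U‖_∞ ≤ ‖u‖_∞` is the triangle
inequality for the same reason.
-/

open Finset

section Combinatorics

variable {α : Type*} [DecidableEq α]

theorem powersetCard_eq_filter_subset {s A : Finset α} (hA : A ⊆ s) (r : ℕ) :
    A.powersetCard r = {T ∈ powersetCard r s | T ⊆ A} := by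
  ext T
  simp only [mem_powersetCard, mem_filter]
  exact ⟨fun ⟨h1, h2⟩ => ⟨⟨h1.trans hA, h2⟩, h1⟩, fun ⟨⟨_, h2⟩, h3⟩ => ⟨h3, h2⟩⟩

def inclusionSum (m : ℕ) (v : Finset α → ℝ) (A : Finset α) : ℝ :=
  ∑ S ∈ A.powersetCard m, v S

theorem inclusionSum_inclusionSum {m k : ℕ} (hmk : m ≤ k) (v : Finset α → ℝ) {A : Finset α}
    (hA : #A = k + 1) :
    inclusionSum k (inclusionSum m v) A = (k + 1 - m : ℕ) * inclusionSum m v A := by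
  unfold inclusionSum
  rw [sum_comm' (t' := A.powersetCard m) (s' := fun S => {T ∈ A.powersetCard k | S ⊆ T})]
  · rw [mul_sum]
    refine sum_congr rfl fun S hS => ?_
    rw [mem_powersetCard] at hS
    rw [sum_const, nsmul_eq_mul, card_filter_powersetCard_subset S A k hS.1 (by omega), hA, hS.2,
      show k + 1 - m = k - m + 1 by omega, Nat.choose_succ_self_right]
  · intro T S
    simp only [mem_powersetCard, mem_filter]
    constructor
    · rintro ⟨⟨hTA, hT⟩, hST, hS⟩
      exact ⟨⟨⟨hTA, hT⟩, hST⟩, hST.trans hTA, hS⟩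
    · rintro ⟨⟨⟨hTA, hT⟩, hST⟩, -, hS⟩
      exact ⟨⟨hTA, hT⟩, hST, hS⟩

theorem sum_sq_sum_filter {β γ : Type*} (𝒜 : Finset γ) (ℬ : Finset β) (p : γ → β → Prop)
    [∀ A, DecidablePred (p A)] (t : β → ℝ) :
    ∑ A ∈ 𝒜, (∑ T ∈ ℬ with p A T, t T) ^ 2 =
      ∑ T ∈ ℬ, ∑ T' ∈ ℬ, t T * t T' * (#{A ∈ 𝒜 | p A T ∧ p A T'} : ℝ) := by
  have hsq : ∀ A, (∑ T ∈ ℬ with p A T, t T) ^ 2 =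
      ∑ T ∈ ℬ, ∑ T' ∈ ℬ, if p A T ∧ p A T' then t T * t T' else 0 := by
    intro A
    rw [sq, sum_filter, sum_mul_sum]
    refine sum_congr rfl fun T _ => sum_congr rfl fun T' _ => ?_
    by_cases h : p A T <;> by_cases h' : p A T' <;> simp [h, h']
  simp_rw [hsq]
  rw [sum_comm]
  refine sum_congr rfl fun T _ => ?_
  rw [sum_comm]
  refine sum_congr rfl fun T' _ => ?_
  rw [← sum_filter, sum_const, nsmul_eq_mul, mul_comm]

variable [Fintype α]

theorem card_superset_sub_card_subset {k : ℕ} (hk : 1 ≤ k) {T T' : Finset α} (hT : #T = k)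
    (hT' : #T' = k) :
    (#{A ∈ powersetCard (k + 1) univ | T ∪ T' ⊆ A} : ℝ) - #((T ∩ T').powersetCard (k - 1)) =
      if T = T' then (Fintype.card α : ℝ) - 2 * k else 0 := by
  split_ifs with hTT
  · subst hTT
    have hkα : k ≤ Fintype.card α := hT ▸ card_le_univ T
    rw [union_self, inter_self,
      card_filter_powersetCard_subset T univ (k + 1) (subset_univ T) (by omega), card_powersetCard,
      card_univ, hT, show k + 1 - k = 1 by omega, Nat.choose_one_right,
      Nat.choose_symm hk, Nat.choose_one_right, Nat.cast_sub hkα]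
    ring
  · have hlt : #(T ∩ T') < k := hT ▸ card_lt_card ⟨inter_subset_left, fun h =>
      hTT (eq_of_subset_of_card_le (h.trans inter_subset_right) (by omega))⟩
    have hcard : #(T ∪ T') + #(T ∩ T') = 2 * k := by rw [card_union_add_card_inter, hT, hT']; ring
    rcases (show #(T ∩ T') = k - 1 ∨ #(T ∩ T') < k - 1 by omega) with h | h
    · rw [card_filter_powersetCard_subset _ univ (k + 1) (subset_univ _) (by omega),
        card_powersetCard, h]
      simp [show k + 1 - #(T ∪ T') = 0 by omega]
    · have hempty : {A ∈ powersetCard (k + 1) (univ : Finset α) | T ∪ T' ⊆ A} = ∅ := by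
        refine filter_eq_empty_iff.mpr fun A hA hsub => ?_
        have := card_le_card hsub
        rw [mem_powersetCard_univ] at hA
        omega
      rw [hempty, card_powersetCard, Nat.choose_eq_zero_of_lt h]
      simp

theorem sum_sq_inclusionSum_sub_sum_sq {k : ℕ} (hk : 1 ≤ k) (t : Finset α → ℝ) :
    ∑ A ∈ powersetCard (k + 1) univ, inclusionSum k t A ^ 2 -
        ∑ R ∈ powersetCard (k - 1) univ, (∑ T ∈ powersetCard k univ with R ⊆ T, t T) ^ 2 =
      ((Fintype.card α : ℝ) - 2 * k) * ∑ T ∈ powersetCard k univ, t T ^ 2 := by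
  have hup : ∀ A : Finset α, inclusionSum k t A = ∑ T ∈ powersetCard k univ with T ⊆ A, t T :=
    fun A => by rw [inclusionSum, powersetCard_eq_filter_subset (subset_univ A)]
  simp_rw [hup]
  rw [sum_sq_sum_filter, sum_sq_sum_filter, ← sum_sub_distrib, mul_sum]
  refine sum_congr rfl fun T hT => ?_
  rw [mem_powersetCard_univ] at hT
  have hcount : ∀ T' ∈ powersetCard k univ,
      t T * t T' * (#{A ∈ powersetCard (k + 1) univ | T ⊆ A ∧ T' ⊆ A} : ℝ) -
        t T * t T' * (#{R ∈ powersetCard (k - 1) univ | R ⊆ T ∧ R ⊆ T'} : ℝ) =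
      if T = T' then t T * t T' * ((Fintype.card α : ℝ) - 2 * k) else 0 := by
    intro T' hT'
    rw [mem_powersetCard_univ] at hT'
    simp_rw [← union_subset_iff, ← subset_inter_iff]
    rw [← powersetCard_eq_filter_subset (subset_univ _), ← mul_sub,
      card_superset_sub_card_subset hk hT hT']
    split_ifs <;> simp
  rw [← sum_sub_distrib, sum_congr rfl hcount, sum_ite_eq,
    if_pos (mem_powersetCard_univ.mpr hT)]
  ring

theorem eq_zero_of_inclusionSum_succ_eq_zero {k : ℕ} (hk : 1 ≤ k) (hkα : 2 * k < Fintype.card α)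
    {t : Finset α → ℝ} (h : ∀ A, #A = k + 1 → inclusionSum k t A = 0) {T : Finset α}
    (hT : #T = k) : t T = 0 := by
  have hpos : (0 : ℝ) < Fintype.card α - 2 * k := by
    rw [sub_pos]
    exact_mod_cast hkα
  have hnonpos : ((Fintype.card α : ℝ) - 2 * k) * ∑ T ∈ powersetCard k univ, t T ^ 2 ≤ 0 := by
    rw [← sum_sq_inclusionSum_sub_sum_sq hk,
      sum_eq_zero fun A hA => by rw [h A (mem_powersetCard_univ.mp hA), zero_pow two_ne_zero],
      zero_sub, neg_nonpos]
    exact sum_nonneg fun _ _ => sq_nonneg _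
  have hsum : ∑ T ∈ powersetCard k univ, t T ^ 2 = 0 :=
    le_antisymm (nonpos_of_mul_nonpos_right hnonpos hpos) (sum_nonneg fun _ _ => sq_nonneg _)
  exact pow_eq_zero_iff two_ne_zero |>.mp <|
    (sum_eq_zero_iff_of_nonneg fun _ _ => sq_nonneg _).mp hsum T (mem_powersetCard_univ.mpr hT)

theorem eq_zero_of_inclusionSum_eq_zero {m N : ℕ} (hm : 1 ≤ m) (hmN : m ≤ N)
    (hNα : 2 * N ≤ Fintype.card α + 1) {v : Finset α → ℝ}
    (h : ∀ A, #A = N → inclusionSum m v A = 0) {S : Finset α} (hS : #S = m) : v S = 0 := by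
  have hdown : ∀ k, m ≤ k → k ≤ N → ∀ A, #A = k → inclusionSum m v A = 0 := by
    intro k hmk hkN
    induction hkN using Nat.decreasingInduction with
    | self => exact h
    | of_succ k hkN ih =>
      intro A hA
      refine eq_zero_of_inclusionSum_succ_eq_zero (by omega) (by omega) (fun B hB => ?_) hA
      rw [inclusionSum_inclusionSum hmk v hB, ih (by omega) B hB, mul_zero]
  simpa [inclusionSum, ← hS] using hdown m le_rfl hmN S hS

theorem exists_abs_le_mul_sum_abs_inclusionSum {m N : ℕ} (hm : 1 ≤ m) (hmN : m ≤ N)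
    (hNα : 2 * N ≤ Fintype.card α + 1) :
    ∃ c : ℝ≥0, 0 < c ∧ ∀ v : Finset α → ℝ, (∀ S, #S ≠ m → v S = 0) →
      ∀ T, |v T| ≤ c * ∑ A ∈ powersetCard N univ, |inclusionSum m v A| := by
  let V : Submodule ℝ (Finset α → ℝ) := Submodule.pi {S | #S ≠ m} fun _ => ⊥
  let Φ : (Finset α → ℝ) →ₗ[ℝ] (powersetCard N (univ : Finset α) → ℝ) :=
    LinearMap.pi fun A => ∑ S ∈ A.1.powersetCard m, LinearMap.proj S
  have hΦ : ∀ v A, Φ v A = inclusionSum m v A := by simp [Φ, inclusionSum]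
  have hinj : Function.Injective (Φ.domRestrict V) := by
    refine (injective_iff_map_eq_zero _).mpr fun ⟨v, hv⟩ h0 => Subtype.ext <| funext fun S => ?_
    by_cases hS : #S = m
    · refine eq_zero_of_inclusionSum_eq_zero hm hmN hNα (fun A hA => ?_) hS
      simpa [hΦ] using congrFun h0 ⟨A, mem_powersetCard_univ.mpr hA⟩
    · simpa using Submodule.mem_pi.mp hv S hS
  obtain ⟨K, hK0, hK⟩ := (Φ.domRestrict V).exists_antilipschitzWith (LinearMap.ker_eq_bot.mpr hinj)
  refine ⟨K, hK0, fun v hv T => ?_⟩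
  have hvV : v ∈ V := Submodule.mem_pi.mpr fun S hS => by simpa using hv S hS
  calc |v T| = ‖v T‖ := (Real.norm_eq_abs _).symm
    _ ≤ ‖(⟨v, hvV⟩ : V)‖ := norm_le_pi_norm v T
    _ ≤ K * ‖Φ v‖ := ZeroHomClass.bound_of_antilipschitz _ hK _
    _ ≤ K * ∑ A ∈ powersetCard N univ, |inclusionSum m v A| := by
      gcongr
      refine (pi_norm_le_iff_of_nonneg (by positivity)).mpr fun A => ?_
      rw [hΦ, ← sum_coe_sort]
      exact single_le_sum (f := fun A : powersetCard N univ => |inclusionSum m v A|)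
        (fun _ _ => abs_nonneg _) (mem_univ A)

end Combinatorics

theorem MeasureTheory.Measure.map_pi_comp_of_injective {ι κ Λ : Type*} [Fintype ι] [Fintype κ]
    [MeasurableSpace Λ] (μ : Measure Λ) [SigmaFinite μ] {f : κ → ι} (hf : f.Injective) :
    (Measure.pi fun _ : ι => μ).map (fun w => w ∘ f) =
      μ Set.univ ^ (Fintype.card ι - Fintype.card κ) • Measure.pi fun _ : κ => μ := by
  classical
  let e : κ ≃ Set.range f := Equiv.ofInjective f hf
  have hcomp : (fun w : ι → Λ => w ∘ f) = (MeasurableEquiv.piCongrLeft (fun _ => Λ) e).symm ∘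
      Prod.fst ∘ MeasurableEquiv.piEquivPiSubtypeProd (fun _ => Λ) (· ∈ Set.range f) := by
    funext w j
    simp [e, MeasurableEquiv.piCongrLeft, Equiv.piCongrLeft_symm_apply,
      MeasurableEquiv.piEquivPiSubtypeProd]
  have hcard : Fintype.card {i // i ∉ Set.range f} = Fintype.card ι - Fintype.card κ := by
    rw [Fintype.card_subtype_compl, Set.card_range_of_injective hf]
  rw [hcomp, ← Measure.map_map (by fun_prop) (by fun_prop),
    ← Measure.map_map (by fun_prop) (by fun_prop),
    (measurePreserving_piEquivPiSubtypeProd _ _).map_eq, Measure.map_fst_prod, Measure.map_smul,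
    Measure.pi_univ, Finset.prod_const, Finset.card_univ, hcard]
  congr 1
  convert ((measurePreserving_piCongrLeft (fun _ => μ) e).symm _).map_eq

theorem eLpNorm_top_pi_comp_of_injective {ι κ Λ E : Type*} [Fintype ι] [Fintype κ]
    [MeasurableSpace Λ] [NormedAddCommGroup E] {μ : Measure Λ} [SigmaFinite μ] (hμ : μ ≠ 0)
    {f : κ → ι} (hf : f.Injective) {g : (κ → Λ) → E}
    (hg : AEStronglyMeasurable g (Measure.pi fun _ => μ)) :
    eLpNorm (fun w => g (w ∘ f)) ⊤ (Measure.pi fun _ => μ) =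
      eLpNorm g ⊤ (Measure.pi fun _ => μ) := by
  have hc : μ Set.univ ^ (Fintype.card ι - Fintype.card κ) ≠ 0 :=
    pow_ne_zero _ (Measure.measure_univ_ne_zero.mpr hμ)
  have hmeas : Measurable fun w : ι → Λ => w ∘ f :=
    measurable_pi_lambda _ fun j => measurable_pi_apply (f j)
  rw [← Function.comp_def, ← eLpNorm_map_measure _ hmeas.aemeasurable,
    Measure.map_pi_comp_of_injective μ hf, eLpNorm_smul_measure_of_ne_zero hc]
  · simp
  · rw [Measure.map_pi_comp_of_injective μ hf]
    exact hg.smul_measure _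

section GeneralizedMean

variable {Λ : Type*}

def subsetValue {α : Type*} [LinearOrder α] {m : ℕ} (u : (Fin m → Λ) → ℝ) (w : α → Λ)
    (S : Finset α) : ℝ :=
  if h : #S = m then u (w ∘ S.orderEmbOfFin h) else 0

theorem genMean_eq_sum_subsetValue (N m : ℕ) (u : (Fin m → Λ) → ℝ) (y : Fin N → Λ) :
    genMean N m u y = (N.choose m : ℝ)⁻¹ * ∑ s ∈ powersetCard m univ, subsetValue u y s := by
  rw [genMean, ← sum_attach (powersetCard m univ)]
  congr 1
  refine sum_congr rfl fun s _ => ?_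
  rw [subsetValue, dif_pos (mem_powersetCard_univ.mp s.2)]
  rfl

theorem subsetValue_comp {α : Type*} [LinearOrder α] {N m : ℕ} (u : (Fin m → Λ) → ℝ) (w : α → Λ)
    (e : Fin N ↪o α) (s : Finset (Fin N)) :
    subsetValue u (w ∘ e) s = subsetValue u w (s.map e.toEmbedding) := by
  unfold subsetValue
  by_cases hs : #s = m
  · have hs' : #(s.map e.toEmbedding) = m := by rw [card_map, hs]
    rw [dif_pos hs, dif_pos hs', ← orderEmbOfFin_unique hs' (f := e ∘ s.orderEmbOfFin hs)
      (fun i => mem_map_of_mem _ (orderEmbOfFin_mem s hs i))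
      (e.strictMono.comp (s.orderEmbOfFin hs).strictMono)]
    rfl
  · rw [dif_neg hs, dif_neg (by rwa [card_map])]

theorem choose_mul_genMean_comp {α : Type*} [LinearOrder α] {N m : ℕ} (hmN : m ≤ N)
    (u : (Fin m → Λ) → ℝ) (w : α → Λ) {A : Finset α} (hA : #A = N) :
    N.choose m * genMean N m u (w ∘ A.orderEmbOfFin hA) = inclusionSum m (subsetValue u w) A := by
  have hchoose : (N.choose m : ℝ) ≠ 0 := by exact_mod_cast (Nat.choose_pos hmN).ne'
  rw [genMean_eq_sum_subsetValue, ← mul_assoc, mul_inv_cancel₀ hchoose, one_mul, inclusionSum]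
  conv_rhs => rw [← map_orderEmbOfFin_univ A hA, powersetCard_map, sum_map]
  simp_rw [subsetValue_comp]
  rfl

variable [MeasurableSpace Λ] {μ : Measure Λ} [SigmaFinite μ] {m : ℕ} {u : (Fin m → Λ) → ℝ}

theorem Measurable.subsetValue {α : Type*} [LinearOrder α] (hu : Measurable u) (S : Finset α) :
    Measurable fun w : α → Λ => subsetValue u w S := by
  unfold _root_.subsetValue
  split_ifs
  · exact hu.comp (measurable_pi_lambda _ fun i => measurable_pi_apply _)
  · exact measurable_const

theorem Measurable.genMean (hu : Measurable u) (N : ℕ) : Measurable (genMean N m u) := by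
  rw [funext (genMean_eq_sum_subsetValue N m u)]
  exact (Finset.measurable_sum _ fun s _ => hu.subsetValue s).const_mul _

theorem eLpNorm_subsetValue {α : Type*} [LinearOrder α] [Fintype α] (hμ : μ ≠ 0)
    (hu : Measurable u) {S : Finset α} (hS : #S = m) :
    eLpNorm (fun w => subsetValue u w S) ⊤ (Measure.pi fun _ => μ) =
      eLpNorm u ⊤ (Measure.pi fun _ => μ) := by
  simp only [subsetValue, dif_pos hS]
  exact eLpNorm_top_pi_comp_of_injective hμ (S.orderEmbOfFin hS).injective hu.aestronglyMeasurable

theorem eLpNorm_genMean_le (hμ : μ ≠ 0) {N : ℕ} (hmN : m ≤ N) (hu : Measurable u) :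
    eLpNorm (genMean N m u) ⊤ (Measure.pi fun _ => μ) ≤ eLpNorm u ⊤ (Measure.pi fun _ => μ) := by
  have hchoose : (N.choose m : ℝ≥0∞) ≠ 0 := by exact_mod_cast (Nat.choose_pos hmN).ne'
  calc eLpNorm (genMean N m u) ⊤ (Measure.pi fun _ => μ)
      = ‖(N.choose m : ℝ)⁻¹‖ₑ * eLpNorm (∑ s ∈ powersetCard m univ, fun y => subsetValue u y s) ⊤
          (Measure.pi fun _ => μ) := by
        rw [← eLpNorm_const_smul, funext (genMean_eq_sum_subsetValue N m u)]
        congr 1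
        ext y
        simp
    _ ≤ ‖(N.choose m : ℝ)⁻¹‖ₑ * ∑ s ∈ powersetCard m univ,
          eLpNorm (fun y => subsetValue u y s) ⊤ (Measure.pi fun _ => μ) := by
        gcongr
        exact eLpNorm_sum_le (fun s _ => (hu.subsetValue s).aestronglyMeasurable) le_top
    _ = eLpNorm u ⊤ (Measure.pi fun _ => μ) := by
        rw [sum_congr rfl fun s hs => eLpNorm_subsetValue hμ hu (mem_powersetCard_univ.mp hs),
          sum_const, card_powersetCard, card_univ, Fintype.card_fin, nsmul_eq_mul,
          enorm_inv (by exact_mod_cast hchoose), Real.enorm_natCast, ← mul_assoc,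
          ENNReal.inv_mul_cancel hchoose (ENNReal.natCast_ne_top _), one_mul]

theorem eLpNorm_inclusionSum_subsetValue {α : Type*} [LinearOrder α] [Fintype α] (hμ : μ ≠ 0)
    {N : ℕ} (hmN : m ≤ N) (hu : Measurable u) {A : Finset α} (hA : #A = N) :
    eLpNorm (fun w => inclusionSum m (subsetValue u w) A) ⊤ (Measure.pi fun _ => μ) =
      N.choose m * eLpNorm (genMean N m u) ⊤ (Measure.pi fun _ => μ) := by
  have hsmul : (fun w => inclusionSum m (subsetValue u w) A) =
      (N.choose m : ℝ) • fun w => genMean N m u (w ∘ A.orderEmbOfFin hA) := by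
    ext w
    rw [← choose_mul_genMean_comp hmN u w hA, Pi.smul_apply, smul_eq_mul]
  rw [hsmul, eLpNorm_const_smul, Real.enorm_natCast, eLpNorm_top_pi_comp_of_injective hμ
    (A.orderEmbOfFin hA).injective (hu.genMean N).aestronglyMeasurable]

theorem exists_eLpNorm_le_mul_eLpNorm_genMean (hμ : μ ≠ 0) (hm : 1 ≤ m) {N : ℕ} (hmN : m ≤ N) :
    ∃ C : ℝ≥0, 0 < C ∧ ∀ u : (Fin m → Λ) → ℝ, Measurable u →
      eLpNorm u ⊤ (Measure.pi fun _ => μ) ≤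
        C * eLpNorm (genMean N m u) ⊤ (Measure.pi fun _ => μ) := by
  obtain ⟨c, hc0, hc⟩ := exists_abs_le_mul_sum_abs_inclusionSum (α := Fin (2 * N)) hm hmN (by simp)
  obtain ⟨T, -, hT⟩ := exists_subset_card_eq (s := (univ : Finset (Fin (2 * N)))) (n := m)
    (by simp; omega)
  refine ⟨c * (2 * N).choose N * N.choose m,
    mul_pos (mul_pos hc0 (mod_cast Nat.choose_pos (by omega))) (mod_cast Nat.choose_pos hmN),
    fun u hu => ?_⟩
  set P := powersetCard N (univ : Finset (Fin (2 * N)))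
  set f : Finset (Fin (2 * N)) → (Fin (2 * N) → Λ) → ℝ :=
    fun A w => inclusionSum m (subsetValue u w) A
  have hf : ∀ A, Measurable (f A) := fun A => Finset.measurable_sum _ fun S _ => hu.subsetValue S
  have hpointwise : ∀ w, ‖subsetValue u w T‖ ≤ (c : ℝ) * ∑ A ∈ P, ‖f A w‖ :=
    fun w => (Real.norm_eq_abs _).trans_le (hc (subsetValue u w) (fun S hS => dif_neg hS) T)
  calc eLpNorm u ⊤ (Measure.pi fun _ => μ)
      = eLpNorm (fun w => subsetValue u w T) ⊤ (Measure.pi fun _ => μ) :=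
        (eLpNorm_subsetValue hμ hu hT).symm
    _ ≤ eLpNorm ((c : ℝ) • ∑ A ∈ P, fun w => ‖f A w‖) ⊤ (Measure.pi fun _ => μ) :=
        eLpNorm_mono_real fun w => by simpa using hpointwise w
    _ ≤ c * ∑ A ∈ P, eLpNorm (f A) ⊤ (Measure.pi fun _ => μ) := by
        rw [eLpNorm_const_smul, NNReal.enorm_eq]
        gcongr
        refine (eLpNorm_sum_le (fun A _ => (hf A).norm.aestronglyMeasurable) le_top).trans_eq ?_
        exact sum_congr rfl fun A _ => eLpNorm_norm (f A)
    _ = c * (2 * N).choose N * N.choose m * eLpNorm (genMean N m u) ⊤ (Measure.pi fun _ => μ) := by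
        rw [sum_congr rfl fun A hA =>
            eLpNorm_inclusionSum_subsetValue hμ hmN hu (mem_powersetCard_univ.mp hA),
          sum_const, card_powersetCard, card_univ, Fintype.card_fin, nsmul_eq_mul]
        ring

end GeneralizedMean

/-- **Theorem 2(ii).** There is a constant `C(N,m) > 0` such that for every
`u ∈ L^∞(Λ^m; d^m x)`, with `U = G_{N,m} u`, one has
`‖U‖_∞ ≤ ‖u‖_∞ ≤ C(N,m) ‖U‖_∞`; in particular `G_{N,m}` is an isomorphism of
`L^∞(Λ^m)` onto a closed subspace of `L^∞(Λ^N)`. -/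
theorem genMean_memLp_top_iff_norm_est
    {Λ : Type*} [MeasurableSpace Λ] (μ : Measure Λ) [SigmaFinite μ] (hμ : μ ≠ 0)
    (N m : ℕ) (hm : 1 ≤ m) (hmN : m ≤ N) :
    ∃ C : ℝ≥0, 0 < C ∧ ∀ u : (Fin m → Λ) → ℝ, Measurable u →
      MemLp u ⊤ (Measure.pi fun _ : Fin m => μ) →
        MemLp (genMean N m u) ⊤ (Measure.pi fun _ : Fin N => μ) ∧
        eLpNorm (genMean N m u) ⊤ (Measure.pi fun _ : Fin N => μ) ≤
          eLpNorm u ⊤ (Measure.pi fun _ : Fin m => μ) ∧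
        eLpNorm u ⊤ (Measure.pi fun _ : Fin m => μ) ≤
          C * eLpNorm (genMean N m u) ⊤ (Measure.pi fun _ : Fin N => μ) := by
  obtain ⟨C, hC0, hC⟩ := exists_eLpNorm_le_mul_eLpNorm_genMean hμ hm hmN
  refine ⟨C, hC0, fun u hu humem => ?_⟩
  have hle := eLpNorm_genMean_le hμ hmN hu
  exact ⟨⟨(hu.genMean N).aestronglyMeasurable, hle.trans_lt humem.2⟩, hle, hC u hu⟩
end

section
/- Let Λ = ℕ with counting measure μ, and define P : ℕ × ℕ → ℝ by P(i,j) = 1/(i+j)^2 if |i−j| = 1 and P(i,j) = 0 otherwise, and ρ(i) = Σ_j P(i,j). Let u(i) = 2(−1)^i i. Then ∫_{ℕ²} P·|u(i)+u(j)|/2 dμ² = 2 Σ_{i≥1} 1/(2i+1)² < ∞, while ∫_ℕ ρ·|u| dμ = ∞. Hence integrability of a generalized 2-mean with respect to P dμ² does not imply integrability of its kernel with respect to the marginal ρ dμ. -/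
/-!
On adjacent pairs the mean `(u i + u j) / 2` has absolute value `1`: consecutive values of `u`
have opposite signs and moduli differing by `2`. The weighted integrand is therefore `P` itself,
whose mass sits on the two off-diagonals `j = i ± 1`, each carrying `∑ 1 / (2n+1)²`. On the
other hand `ρ i ≥ P i (i+1) = 1 / (2i+1)²` while `|u i| = 2i`, so `ρ |u|` dominates a multiple
of the harmonic series.
-/

open Function

def adjacentPair : ℕ ⊕ ℕ → ℕ × ℕ :=
  Sum.elim (fun n => (n, n + 1)) (fun n => (n + 1, n))

lemma adjacentPair_injective : Injective adjacentPair := by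
  rintro (m | m) (n | n) h <;> simp_all [adjacentPair] <;> omega

lemma mem_range_adjacentPair {i j : ℕ} :
    (i, j) ∈ Set.range adjacentPair ↔ j = i + 1 ∨ i = j + 1 := by
  constructor
  · rintro ⟨n | n, h⟩ <;> simp_all [adjacentPair] <;> omega
  · rintro (rfl | rfl)
    exacts [⟨.inl i, rfl⟩, ⟨.inr j, rfl⟩]

theorem hasSum_of_eq_zero_off_adjacent {M : Type*} [AddCommMonoid M] [TopologicalSpace M]
    [ContinuousAdd M] {f : ℕ × ℕ → M} {a b : M}
    (hf : ∀ i j, f (i, j) ≠ 0 → j = i + 1 ∨ i = j + 1)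
    (h₁ : HasSum (fun n => f (n, n + 1)) a) (h₂ : HasSum (fun n => f (n + 1, n)) b) :
    HasSum f (a + b) := by
  refine (adjacentPair_injective.hasSum_iff fun ⟨i, j⟩ hij => ?_).mp (h₁.sum h₂)
  by_contra h
  exact hij (mem_range_adjacentPair.mpr (hf i j h))

lemma abs_natCast_sub_natCast_eq_one {i j : ℕ} :
    |(i : ℤ) - (j : ℤ)| = 1 ↔ j = i + 1 ∨ i = j + 1 := by
  rw [abs_eq zero_le_one]
  omega

noncomputable def adjacentKernel (i j : ℕ) : ℝ :=
  if |(i : ℤ) - (j : ℤ)| = 1 then 1 / ((i : ℝ) + (j : ℝ)) ^ 2 else 0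

lemma adjacentKernel_nonneg (i j : ℕ) : 0 ≤ adjacentKernel i j := by
  unfold adjacentKernel
  split_ifs <;> positivity

lemma adjacent_of_adjacentKernel_ne_zero {i j : ℕ} (h : adjacentKernel i j ≠ 0) :
    j = i + 1 ∨ i = j + 1 := by
  by_contra hij
  exact h (if_neg (mt abs_natCast_sub_natCast_eq_one.mp hij))

lemma adjacentKernel_self_succ (n : ℕ) :
    adjacentKernel n (n + 1) = 1 / (2 * (n : ℝ) + 1) ^ 2 := by
  rw [adjacentKernel, if_pos (abs_natCast_sub_natCast_eq_one.mpr (.inl rfl))]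
  push_cast
  ring

lemma adjacentKernel_succ_self (n : ℕ) :
    adjacentKernel (n + 1) n = 1 / (2 * (n : ℝ) + 1) ^ 2 := by
  rw [adjacentKernel, if_pos (abs_natCast_sub_natCast_eq_one.mpr (.inr rfl))]
  push_cast
  ring

lemma summable_adjacentKernel (i : ℕ) : Summable (adjacentKernel i) := by
  refine summable_of_ne_finset_zero (s := {i - 1, i + 1}) fun j hj => ?_
  by_contra h
  simp only [Finset.mem_insert, Finset.mem_singleton] at hj
  rcases adjacent_of_adjacentKernel_ne_zero h with h | h <;> omega

lemma one_div_two_mul_add_one_sq_le_tsum_adjacentKernel (i : ℕ) :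
    1 / (2 * (i : ℝ) + 1) ^ 2 ≤ ∑' j, adjacentKernel i j :=
  adjacentKernel_self_succ i ▸
    (summable_adjacentKernel i).le_tsum (i + 1) fun j _ => adjacentKernel_nonneg i j

def alternatingRamp (i : ℕ) : ℝ := 2 * (-1) ^ i * i

lemma abs_alternatingRamp (i : ℕ) : |alternatingRamp i| = 2 * i := by
  simp [alternatingRamp, abs_mul]

lemma abs_alternatingRamp_add_succ_div_two (n : ℕ) :
    |(alternatingRamp n + alternatingRamp (n + 1)) / 2| = 1 := by
  have : (alternatingRamp n + alternatingRamp (n + 1)) / 2 = -(-1) ^ n := by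
    simp only [alternatingRamp, pow_succ]
    push_cast
    ring
  simp [this]

lemma summable_one_div_two_mul_add_one_sq :
    Summable fun n : ℕ => 1 / (2 * (n : ℝ) + 1) ^ 2 := by
  have hinj : Injective fun n : ℕ => 2 * n + 1 := fun a b h => by simp_all
  refine ((Real.summable_one_div_nat_pow.mpr one_lt_two).comp_injective hinj).congr fun n => ?_
  simp

lemma not_summable_div_two_mul_add_one_sq :
    ¬ Summable fun i : ℕ => (i : ℝ) / (2 * i + 1) ^ 2 := by
  intro h
  refine Real.not_summable_one_div_natCast ((h.mul_left 9).of_nonneg_of_le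
    (fun i => by positivity) fun i => ?_)
  rcases Nat.eq_zero_or_pos i with rfl | hi
  · simp
  have hi : (1 : ℝ) ≤ i := by exact_mod_cast hi
  rw [mul_div_assoc', div_le_div_iff₀ (by positivity) (by positivity)]
  nlinarith

/-- **Example.** On `ℕ` with counting measure, with
`P(i,j) = 1/(i+j)² if |i−j| = 1, else 0`, marginal `ρ(i) = ∑ⱼ P(i,j)`, and
`u(i) = 2(−1)ⁱ i`, the generalized 2-mean `(u(i)+u(j))/2` is integrable with respect to
`P dμ²` (indeed `∫ P |G_{2,1}u| = 2 ∑_{i≥1} 1/(2i+1)² < ∞`), but the kernel `u` is not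
integrable with respect to `ρ dμ`. -/
theorem counterexample_integrability
    (P : ℕ → ℕ → ℝ) (ρ u : ℕ → ℝ)
    (hP : ∀ i j, P i j = if |(i : ℤ) - (j : ℤ)| = 1 then 1 / ((i : ℝ) + (j : ℝ)) ^ 2 else 0)
    (hρ : ∀ i, ρ i = ∑' j, P i j)
    (hu : ∀ i, u i = 2 * (-1 : ℝ) ^ i * i) :
    Summable (fun p : ℕ × ℕ => P p.1 p.2 * |(u p.1 + u p.2) / 2|) ∧
    (∑' p : ℕ × ℕ, P p.1 p.2 * |(u p.1 + u p.2) / 2|) = 2 * ∑' i : ℕ, 1 / ((2 * (i : ℝ) + 1)) ^ 2 ∧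
    ¬ Summable (fun i : ℕ => ρ i * |u i|) := by
  obtain rfl : P = adjacentKernel := funext₂ hP
  obtain rfl : u = alternatingRamp := funext hu
  have hc := summable_one_div_two_mul_add_one_sq.hasSum
  have hmean : HasSum (fun p : ℕ × ℕ => adjacentKernel p.1 p.2 *
      |(alternatingRamp p.1 + alternatingRamp p.2) / 2|)
      (2 * ∑' i : ℕ, 1 / (2 * (i : ℝ) + 1) ^ 2) := by
    rw [two_mul]
    refine hasSum_of_eq_zero_off_adjacent
      (fun i j h => adjacent_of_adjacentKernel_ne_zero (left_ne_zero_of_mul h)) ?_ ?_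
    · simpa only [adjacentKernel_self_succ, abs_alternatingRamp_add_succ_div_two, mul_one] using hc
    · simpa only [adjacentKernel_succ_self, add_comm (alternatingRamp (_ + 1)),
        abs_alternatingRamp_add_succ_div_two, mul_one] using hc
  refine ⟨hmean.summable, hmean.tsum_eq, fun hρu => not_summable_div_two_mul_add_one_sq ?_⟩
  refine (hρu.div_const 2).of_nonneg_of_le (fun i => by positivity) fun i => ?_
  calc (i : ℝ) / (2 * i + 1) ^ 2 = i * (1 / (2 * i + 1) ^ 2) := by ring
    _ ≤ i * ρ i := by
      rw [hρ]
      gcongr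
      exact one_div_two_mul_add_one_sq_le_tsum_adjacentKernel i
    _ = ρ i * |alternatingRamp i| / 2 := by rw [abs_alternatingRamp]; ring
end

section
/- Let (Λ, dx) be a complete σ-finite measure space, N ≥ 2, P a symmetric probability density on Λ^N, and ρ^{(k)} its k-variable marginal. Let 1 ≤ m ≤ N−1, A ⊂ Λ of positive measure, and γ : A → (0,∞) measurable. If ρ^{(m+1)}(x_1,...,x_{m+1}) ≥ γ(x_{m+1}) ρ^{(m)}(x_1,...,x_m) for a.e. (x_1,...,x_{m+1}) ∈ Λ^m × A, then ρ^{(m)}(x_1,...,x_m) ≥ γ(x_m) ρ^{(m−1)}(x_1,...,x_{m−1}) for a.e. (x_1,...,x_m) ∈ Λ^{m−1} × A (with ρ^{(0)} := 1). -/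
open MeasureTheory

/-- The `k`-variable marginal `ρ^{(k)}` of a density `P` on `Λ^N`:
`ρ^{(k)}(x₁,…,x_k) = ∫_{Λ^{N−k}} P(x₁,…,x_N) dx_{k+1} ⋯ dx_N` (with `ρ^{(N)} = P`,
`ρ^{(0)} = ∫ P`). -/
noncomputable def marg {Λ : Type*} [MeasurableSpace Λ] (μ : Measure Λ) (N k : ℕ)
    (hk : k ≤ N) (P : (Fin N → Λ) → ℝ) : (Fin k → Λ) → ℝ :=
  fun y => ∫ z : Fin (N - k) → Λ,
    P (fun i => Fin.append y z (Fin.cast (by omega) i)) ∂(Measure.pi fun _ => μ)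

/-!
The marginals inherit the symmetry of `P`, so the hypothesis at level `m + 1` also holds with
its last two variables exchanged:
`ρ^{(m+1)}(x₁,…,x_m, z) ≥ γ(x_m) ρ^{(m)}(x₁,…,x_{m−1}, z)` for `x_m ∈ A`.
Integrating in `z` and using `∫ ρ^{(k+1)}(y, z) dz = ρ^{(k)}(y)` (Fubini, for a.e. `y`, since
`P` is integrable) on both sides gives the inequality at level `m`.
-/

theorem Fin.snoc_comp_swap_castSucc_last {α : Type*} {n : ℕ} (x : Fin (n + 1) → α) (z : α) :
    Fin.snoc x z ∘ Equiv.swap (Fin.last n).castSucc (Fin.last (n + 1)) =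
      Fin.snoc (Fin.snoc (Fin.init x) z) (x (Fin.last n)) := by
  ext i
  induction i using Fin.lastCases with
  | last => simp
  | cast j =>
    induction j using Fin.lastCases with
    | last => simp
    | cast j =>
      rw [Function.comp_apply,
        Equiv.swap_apply_of_ne_of_ne (by simp [Fin.ext_iff, j.isLt.ne]) (Fin.castSucc_ne_last _)]
      simp [Fin.init]

section

variable {Λ : Type*} [MeasurableSpace Λ] (μ : Measure Λ) [SigmaFinite μ]

theorem measurePreserving_comp_equiv {ι ι' : Type*} [Fintype ι] [Fintype ι'] (e : ι ≃ ι') :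
    MeasurePreserving (fun x : ι' → Λ => x ∘ e) (Measure.pi fun _ => μ)
      (Measure.pi fun _ => μ) := by
  convert measurePreserving_piCongrLeft (fun _ : ι => μ) e.symm using 1
  ext x i
  simp [MeasurableEquiv.coe_piCongrLeft, Equiv.piCongrLeft_apply_eq_cast]

theorem measurePreserving_append_cast {k n N : ℕ} (h : N = k + n) :
    MeasurePreserving
      (fun p : (Fin k → Λ) × (Fin n → Λ) => Fin.append p.1 p.2 ∘ Fin.cast h)
      ((Measure.pi fun _ => μ).prod (Measure.pi fun _ => μ)) (Measure.pi fun _ => μ) := by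
  convert (measurePreserving_comp_equiv μ ((finCongr h).trans finSumFinEquiv.symm)).comp
    (measurePreserving_sumPiEquivProdPi_symm (X := fun _ : Fin k ⊕ Fin n => Λ) fun _ => μ)
    using 1
  ext p i
  obtain ⟨j, rfl⟩ := (finCongr h).symm.surjective i
  induction j using Fin.addCases <;>
    simp [MeasurableEquiv.coe_sumPiEquivProdPi_symm, Equiv.sumPiEquivProdPi_symm_apply]

theorem measurePreserving_snoc (n : ℕ) :
    MeasurePreserving (fun p : (Fin n → Λ) × Λ => Fin.snoc p.1 p.2)
      ((Measure.pi fun _ => μ).prod μ) (Measure.pi fun _ => μ) := by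
  convert (measurePreserving_piFinSuccAbove (fun _ : Fin (n + 1) => μ) (Fin.last n)).symm.comp
    Measure.measurePreserving_swap using 1
  ext p
  simp

theorem quasiMeasurePreserving_init (n : ℕ) :
    Measure.QuasiMeasurePreserving (Fin.init : (Fin (n + 1) → Λ) → Fin n → Λ)
      (Measure.pi fun _ => μ) (Measure.pi fun _ => μ) := by
  convert Measure.quasiMeasurePreserving_snd.comp (measurePreserving_piFinSuccAbove
    (fun _ : Fin (n + 1) => μ) (Fin.last n)).quasiMeasurePreserving
  ext x
  simp

theorem integrable_integral_cons {E : Type*} [NormedAddCommGroup E] [NormedSpace ℝ E] {n : ℕ}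
    {f : (Fin (n + 1) → Λ) → E} (hf : Integrable f (Measure.pi fun _ => μ)) :
    Integrable (fun z => ∫ w, f (Fin.cons z w) ∂(Measure.pi fun _ => μ)) μ := by
  have h := (measurePreserving_piFinSuccAbove (fun _ : Fin (n + 1) => μ) 0).symm
  have hint := (h.integrable_comp_of_integrable hf).integral_prod_left
  simp only [Function.comp_apply, MeasurableEquiv.piFinSuccAbove_symm_apply,
    Fin.insertNthEquiv_zero] at hint
  exact hint

theorem integral_integral_cons {E : Type*} [NormedAddCommGroup E] [NormedSpace ℝ E] {n : ℕ}
    {f : (Fin (n + 1) → Λ) → E} (hf : Integrable f (Measure.pi fun _ => μ)) :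
    ∫ z, ∫ w, f (Fin.cons z w) ∂(Measure.pi fun _ => μ) ∂μ =
      ∫ v, f v ∂(Measure.pi fun _ => μ) := by
  have h := (measurePreserving_piFinSuccAbove (fun _ : Fin (n + 1) => μ) 0).symm
  rw [← h.integral_comp', integral_prod]
  · simp only [MeasurableEquiv.piFinSuccAbove_symm_apply, Fin.insertNthEquiv_zero]
    rfl
  · exact h.integrable_comp_of_integrable hf

end

section Marginal

variable {Λ : Type*} [MeasurableSpace Λ] {μ : Measure Λ} {N : ℕ} {P : (Fin N → Λ) → ℝ}

theorem marg_eq_integral_append {k : ℕ} (n : ℕ) (h : N = k + n) (hk : k ≤ N)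
    (y : Fin k → Λ) :
    marg μ N k hk P y =
      ∫ v : Fin n → Λ, P (Fin.append y v ∘ Fin.cast h) ∂(Measure.pi fun _ => μ) := by
  obtain rfl : n = N - k := by omega
  rfl

theorem marg_comp_perm (hP : ∀ σ : Equiv.Perm (Fin N), ∀ x, P (x ∘ σ) = P x) {k : ℕ}
    (hk : k ≤ N) (τ : Equiv.Perm (Fin k)) (y : Fin k → Λ) :
    marg μ N k hk P (y ∘ τ) = marg μ N k hk P y := by
  have h : N = k + (N - k) := by omega
  simp only [marg_eq_integral_append _ h]
  congr 1 with z
  let σ : Equiv.Perm (Fin N) := (finCongr h).trans <| finSumFinEquiv.symm.trans <|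
    (τ.sumCongr (Equiv.refl _)).trans <| finSumFinEquiv.trans (finCongr h.symm)
  have hσ : Fin.append (y ∘ τ) z ∘ Fin.cast h = (Fin.append y z ∘ Fin.cast h) ∘ σ := by
    ext i
    obtain ⟨j, rfl⟩ := (finCongr h).symm.surjective i
    induction j using Fin.addCases <;> simp [σ]
  rw [hσ, hP]

theorem marg_succ_snoc {k n : ℕ} (h : N = k + (n + 1)) (hk : k + 1 ≤ N) (y : Fin k → Λ)
    (z : Λ) :
    marg μ N (k + 1) hk P (Fin.snoc y z) =
      ∫ w : Fin n → Λ, P (Fin.append y (Fin.cons z w) ∘ Fin.cast h)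
        ∂(Measure.pi fun _ => μ) := by
  rw [marg_eq_integral_append n (by omega)]
  congr 1 with w
  rw [Fin.append_left_snoc]
  rfl

theorem ae_integrable_marg_snoc_and_integral_eq [SigmaFinite μ]
    (hP : Integrable P (Measure.pi fun _ => μ)) {k : ℕ} (hk : k + 1 ≤ N) :
    ∀ᵐ y ∂(Measure.pi fun _ => μ),
      Integrable (fun z => marg μ N (k + 1) hk P (Fin.snoc y z)) μ ∧
      ∫ z, marg μ N (k + 1) hk P (Fin.snoc y z) ∂μ = marg μ N k (by omega) P y := by
  obtain ⟨n, h⟩ : ∃ n, N = k + (n + 1) := ⟨N - (k + 1), by omega⟩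
  have hsection :=
    ((measurePreserving_append_cast μ h).integrable_comp_of_integrable hP).prod_right_ae
  filter_upwards [hsection] with y hy
  simp only [marg_succ_snoc h, marg_eq_integral_append _ h]
  exact ⟨integrable_integral_cons μ hy, integral_integral_cons μ hy⟩

end Marginal

/-- **Lemma on marginals.** If `ρ^{(m+1)}(x₁,…,x_{m+1}) ≥ γ(x_{m+1}) ρ^{(m)}(x₁,…,x_m)`
a.e. on `Λ^m × A`, then `ρ^{(m)}(x₁,…,x_m) ≥ γ(x_m) ρ^{(m−1)}(x₁,…,x_{m−1})`
a.e. on `Λ^{m−1} × A`. -/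
theorem marg_step_down
    {Λ : Type*} [MeasurableSpace Λ] (μ : Measure Λ) [SigmaFinite μ]
    (N : ℕ) (P : (Fin N → Λ) → ℝ)
    (hPsym : ∀ σ : Equiv.Perm (Fin N), ∀ x, P (x ∘ σ) = P x)
    (hPint : ∫ x, P x ∂(Measure.pi fun _ : Fin N => μ) = 1)
    (m : ℕ) (hm : 1 ≤ m) (hmN : m ≤ N - 1)
    (A : Set Λ)
    (γ : Λ → ℝ)
    (hyp : ∀ᵐ x ∂(Measure.pi fun _ : Fin (m + 1) => μ), x ⟨m, by omega⟩ ∈ A →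
      γ (x ⟨m, by omega⟩) *
        marg μ N m (by omega) P (fun i : Fin m => x (Fin.castLE (by omega) i)) ≤
      marg μ N (m + 1) (by omega) P x) :
    ∀ᵐ x ∂(Measure.pi fun _ : Fin m => μ), x ⟨m - 1, by omega⟩ ∈ A →
      γ (x ⟨m - 1, by omega⟩) *
        marg μ N (m - 1) (by omega) P (fun i : Fin (m - 1) => x (Fin.castLE (by omega) i)) ≤
      marg μ N m (by omega) P x := by
  obtain ⟨n, rfl⟩ : ∃ n, m = n + 1 := ⟨m - 1, by omega⟩
  have hP : Integrable P (Measure.pi fun _ => μ) := .of_integral_ne_zero (by simp [hPint])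
  let σ : Equiv.Perm (Fin (n + 2)) := Equiv.swap (Fin.last n).castSucc (Fin.last (n + 1))
  have hswap : ∀ᵐ x ∂(Measure.pi fun _ => μ), ∀ᵐ z ∂μ, x (Fin.last n) ∈ A →
      γ (x (Fin.last n)) * marg μ N (n + 1) (by omega) P (Fin.snoc (Fin.init x) z) ≤
        marg μ N (n + 2) (by omega) P (Fin.snoc x z) := by
    have := ((measurePreserving_comp_equiv μ σ).comp
      (measurePreserving_snoc μ (n + 1))).quasiMeasurePreserving.ae hyp
    filter_upwards [Measure.ae_ae_of_ae_prod this] with x hx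
    filter_upwards [hx] with z hz
    change (Fin.snoc x z ∘ σ) (Fin.last (n + 1)) ∈ A →
      γ ((Fin.snoc x z ∘ σ) (Fin.last (n + 1))) *
        marg μ N (n + 1) _ P (Fin.init (Fin.snoc x z ∘ σ)) ≤
          marg μ N (n + 2) _ P (Fin.snoc x z ∘ σ) at hz
    rwa [marg_comp_perm hPsym, Fin.snoc_comp_swap_castSucc_last, Fin.init_snoc,
      Fin.snoc_last] at hz
  have hnext := ae_integrable_marg_snoc_and_integral_eq hP (k := n + 1) (by omega)
  have hinit := (quasiMeasurePreserving_init μ n).ae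
    (ae_integrable_marg_snoc_and_integral_eq hP (k := n) (by omega))
  filter_upwards [hswap, hnext, hinit] with x hx hnext hinit hxA
  change γ (x (Fin.last n)) * marg μ N n _ P (Fin.init x) ≤ _
  calc γ (x (Fin.last n)) * marg μ N n _ P (Fin.init x)
      = ∫ z, γ (x (Fin.last n)) * marg μ N (n + 1) _ P (Fin.snoc (Fin.init x) z) ∂μ := by
        rw [integral_const_mul, hinit.2]
    _ ≤ ∫ z, marg μ N (n + 2) _ P (Fin.snoc x z) ∂μ :=
        integral_mono_ae (hinit.1.const_mul _) hnext.1 (hx.mono fun z hz => hz hxA)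
    _ = marg μ N (n + 1) _ P x := hnext.2
end
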